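/- arXiv:2102.03821 — 7 statements merged into one kernel-verified Lean document; each statement's English description precedes it below -/
import Mathlib

section
/- Let w be a right-infinite word over a finite alphabet and suppose there is κ > 0 such that for every positive integer b there exists a positive integer n with L_w(bn) ≤ κ. Then the number of equivalence classes (under having the same factor set) of purely periodic right-infinite words v^ω with Fac(v^ω) ⊆ Fac(w) is at most κ. -/
variable {α : Type*}

/-- `u` occurs in the infinite word `w` at position `i`. -/
def FactorAt (w : ℕ → α) (i : ℕ) (u : List α) : Prop :=
  u = (List.range u.length).map fun k => w (i + k)

/-- The set of (finite) factors of the right-infinite word `w`. -/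
def Fac (w : ℕ → α) : Set (List α) := {u | ∃ i, FactorAt w i u}

/-- The Lie complexity: the number of rotation classes of length-`n` words all of
whose members are factors of `w`. -/
noncomputable def LieComplexity (w : ℕ → α) (n : ℕ) : ℕ :=
  Set.ncard {q : Quotient (List.IsRotated.setoid α) |
    ∃ u : List α, Quotient.mk _ u = q ∧ u.length = n ∧ ∀ v, u.IsRotated v → v ∈ Fac w}

/-- The purely periodic infinite word `v^ω`. -/
def perWord [Inhabited α] (v : List α) (i : ℕ) : α := v.getD (i % v.length) default

/-- `Per(w)`: equivalence classes (identified with their common factor sets) of purely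
periodic right-infinite words `v^ω` all of whose factors occur in `w`. -/
def PerSet {α : Type*} [Inhabited α] (w : ℕ → α) : Set (Set (List α)) :=
  {S | ∃ v : List α, v ≠ [] ∧ S = Fac (perWord v) ∧ S ⊆ Fac w}

/-! ### Auxiliary material -/

/-- The set whose cardinality defines the Lie complexity. -/
def LieSet (w : ℕ → α) (n : ℕ) : Set (Quotient (List.IsRotated.setoid α)) :=
  {q | ∃ u : List α, Quotient.mk _ u = q ∧ u.length = n ∧ ∀ v, u.IsRotated v → v ∈ Fac w}

lemma lieComplexity_eq (w : ℕ → α) (n : ℕ) : LieComplexity w n = (LieSet w n).ncard := rfl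

lemma lieSet_finite [Finite α] (w : ℕ → α) (n : ℕ) : (LieSet w n).Finite := by
  apply Set.Finite.subset
    ((List.finite_length_eq (α := α) (n := n)).image (Quotient.mk (List.IsRotated.setoid α)))
  rintro q ⟨u, rfl, hlen, -⟩
  exact ⟨u, hlen, rfl⟩

lemma fac_mono {f g : ℕ → α} (h : ∀ i, ∃ j, ∀ k, f (i + k) = g (j + k)) :
    Fac f ⊆ Fac g := by
  rintro u ⟨i, hu⟩
  obtain ⟨j, hj⟩ := h i
  refine ⟨j, ?_⟩
  rw [FactorAt] at hu ⊢
  rw [hu]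
  simp only [List.length_map, List.length_range]
  exact List.map_congr_left fun k _ => hj k

lemma fac_shift_eq {f : ℕ → α} {p : ℕ} (hp0 : 0 < p) (hp : ∀ i, f (i + p) = f i) (m : ℕ) :
    Fac (fun i => f (i + m)) = Fac f := by
  have hmul : ∀ t x, f (x + t * p) = f x := by
    intro t
    induction t with
    | zero => intro x; simp
    | succ t ih =>
        intro x
        rw [show x + (t + 1) * p = (x + t * p) + p by ring, hp, ih]
  apply subset_antisymm
  · apply fac_mono
    intro i
    exact ⟨i + m, fun k => by show f (i + k + m) = f (i + m + k); congr 1; omega⟩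
  · apply fac_mono
    intro i
    refine ⟨i + m * p - m, fun k => ?_⟩
    have hmp : m ≤ m * p := Nat.le_mul_of_pos_right m hp0
    show f (i + k) = f (i + m * p - m + k + m)
    rw [show i + m * p - m + k + m = (i + k) + m * p from by omega, hmul]

lemma perWord_periodic [Inhabited α] (v : List α) (i : ℕ) :
    perWord v (i + v.length) = perWord v i := by
  simp [perWord, Nat.add_mod_right]

lemma perWord_rotate [Inhabited α] {v : List α} (hv : v ≠ []) (m : ℕ) :
    perWord (v.rotate m) = fun i => perWord v (i + m) := by
  funext i
  have hL : 0 < v.length := List.length_pos_iff.2 hv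
  unfold perWord
  rw [List.length_rotate]
  have h1 : i % v.length < (v.rotate m).length := by
    rw [List.length_rotate]; exact Nat.mod_lt _ hL
  have h2 : (i + m) % v.length < v.length := Nat.mod_lt _ hL
  rw [List.getD_eq_getElem _ _ h1, List.getD_eq_getElem _ _ h2, List.getElem_rotate]
  simp only [Nat.mod_add_mod]

lemma self_mem_fac_perWord [Inhabited α] {v : List α} (hv : v ≠ []) :
    v ∈ Fac (perWord v) := by
  refine ⟨0, ?_⟩
  rw [FactorAt]
  apply List.ext_getElem (by simp)
  intro k h1 h2
  simp only [List.getElem_map, List.getElem_range, Nat.zero_add]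
  rw [perWord, Nat.mod_eq_of_lt h1, List.getD_eq_getElem _ _ h1]

lemma perWord_pow [Inhabited α] {v : List α} {N : ℕ} (hN : 0 < N)
    (hdvd : v.length ∣ N) :
    perWord ((List.range N).map (perWord v)) = perWord v := by
  funext i
  have hu : ((List.range N).map (perWord v)).length = N := by simp
  have h1 : i % N < ((List.range N).map (perWord v)).length := by
    rw [hu]; exact Nat.mod_lt _ hN
  show ((List.range N).map (perWord v)).getD
      (i % ((List.range N).map (perWord v)).length) default = perWord v i
  rw [hu, List.getD_eq_getElem _ _ h1]
  simp only [List.getElem_map, List.getElem_range]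
  rw [perWord, perWord, Nat.mod_mod_of_dvd _ hdvd]

lemma fac_perWord_eq_of_isRotated [Inhabited α] {u u' : List α} (hu : u ≠ [])
    (h : u.IsRotated u') : Fac (perWord u') = Fac (perWord u) := by
  obtain ⟨m, rfl⟩ := h
  rw [perWord_rotate hu m]
  exact fac_shift_eq (List.length_pos_iff.2 hu) (perWord_periodic u) m

lemma core_bound [Fintype α] [Inhabited α] (w : ℕ → α) (κ : ℕ)
    (h : ∀ b : ℕ, 1 ≤ b → ∃ n : ℕ, 1 ≤ n ∧ LieComplexity w (b * n) ≤ κ)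
    (t : Finset (Set (List α))) (ht : ↑t ⊆ PerSet w) : t.card ≤ κ := by
  classical
  set V : Set (List α) → List α :=
    fun S => if hS : S ∈ PerSet w then hS.choose else [] with hVdef
  have hV : ∀ S ∈ PerSet w, V S ≠ [] ∧ S = Fac (perWord (V S)) ∧ S ⊆ Fac w := by
    intro S hS
    simp only [hVdef, dif_pos hS]
    exact hS.choose_spec
  set b := ∏ S ∈ t, (V S).length with hb
  have hbpos : 0 < b := Finset.prod_pos fun S hS => List.length_pos_iff.2 (hV S (ht hS)).1
  obtain ⟨n, hn, hLie⟩ := h b hbpos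
  set N := b * n with hN
  have hNpos : 0 < N := Nat.mul_pos hbpos hn
  have hAfin := lieSet_finite w N
  set U : Set (List α) → List α := fun S => (List.range N).map (perWord (V S)) with hU
  have hUlen : ∀ S, (U S).length = N := fun S => by simp [hU]
  have hUne : ∀ S, U S ≠ [] := by
    intro S hc
    have := hUlen S
    rw [hc] at this
    simp at this
    omega
  have hUper : ∀ S ∈ t, perWord (U S) = perWord (V S) := fun S hS =>
    perWord_pow hNpos (dvd_mul_of_dvd_left (Finset.dvd_prod_of_mem _ hS) n)
  have hmaps : ∀ S ∈ t, (Quotient.mk (List.IsRotated.setoid α) (U S)) ∈ LieSet w N := by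
    intro S hS
    refine ⟨U S, rfl, hUlen S, ?_⟩
    intro v hrot
    have hvne : v ≠ [] := by
      intro hc
      have hl := hrot.perm.length_eq
      rw [hc, hUlen S] at hl
      simp at hl
      omega
    have heq := fac_perWord_eq_of_isRotated (hUne S) hrot
    have hvmem : v ∈ Fac (perWord v) := self_mem_fac_perWord hvne
    rw [heq, hUper S hS] at hvmem
    exact (hV S (ht hS)).2.2 ((hV S (ht hS)).2.1 ▸ hvmem)
  have hinj : Set.InjOn (fun S => Quotient.mk (List.IsRotated.setoid α) (U S)) ↑t := by
    intro S hS T hT hq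
    have hrot : (U S).IsRotated (U T) := Quotient.exact hq
    have h1 := fac_perWord_eq_of_isRotated (hUne S) hrot
    rw [hUper S hS, hUper T hT] at h1
    rw [(hV S (ht hS)).2.1, (hV T (ht hT)).2.1, ← h1]
  calc t.card = (↑t : Set (Set (List α))).ncard := (Set.ncard_coe_finset t).symm
    _ = ((fun S => Quotient.mk (List.IsRotated.setoid α) (U S)) '' ↑t).ncard :=
        (Set.ncard_image_of_injOn hinj).symm
    _ ≤ (LieSet w N).ncard := by
        apply Set.ncard_le_ncard _ hAfin
        rintro q ⟨S, hS, rfl⟩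
        exact hmaps S hS
    _ ≤ κ := hLie

theorem perSet_card_le [Fintype α] [Inhabited α] (w : ℕ → α) (κ : ℕ) (hκ : 0 < κ)
    (h : ∀ b : ℕ, 1 ≤ b → ∃ n : ℕ, 1 ≤ n ∧ LieComplexity w (b * n) ≤ κ) :
    (PerSet w).Finite ∧ Set.ncard (PerSet w) ≤ κ := by
  classical
  have hfin : (PerSet w).Finite := by
    by_contra hinf
    have hinf' : (PerSet w).Infinite := hinf
    obtain ⟨t, hts, htc⟩ := hinf'.exists_subset_card_eq (κ + 1)
    have := core_bound w κ h t hts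
    omega
  refine ⟨hfin, ?_⟩
  have hc := core_bound w κ h hfin.toFinset (by simp)
  rwa [Set.ncard_eq_toFinset_card _ hfin]
end

section
/- If w is a right-infinite word over a finite alphabet such that the Lie complexity L_w(n) is uniformly bounded, then the set Per(w) of factor-set-equivalence classes of purely periodic infinite words whose factors all occur in w is finite. -/
variable {α : Type*}

/-! ### Auxiliary material -/

/-- The segment of `f` starting at `i` of length `n`. -/
def seg (f : ℕ → α) (i n : ℕ) : List α := (List.range n).map fun k => f (i + k)

lemma seg_length (f : ℕ → α) (i n : ℕ) : (seg f i n).length = n := by unfold seg; simp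

lemma seg_mem_fac (f : ℕ → α) (i n : ℕ) : seg f i n ∈ Fac f :=
  ⟨i, by unfold FactorAt; rw [seg_length]; rfl⟩

lemma mem_fac_iff (f : ℕ → α) (u : List α) : u ∈ Fac f ↔ ∃ i, u = seg f i u.length :=
  Iff.rfl

lemma seg_getElem (f : ℕ → α) (i n k : ℕ) (hk : k < n) :
    (seg f i n)[k]'(by simpa [seg_length] using hk) = f (i + k) := by
  simp [seg]

lemma seg_congr {f g : ℕ → α} {i j n : ℕ} (h : ∀ k < n, f (i + k) = g (j + k)) :
    seg f i n = seg g j n := by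
  unfold seg
  apply List.map_congr_left
  intro k hk
  exact h k (List.mem_range.mp hk)

lemma seg_append (f : ℕ → α) (i m n : ℕ) :
    seg f i m ++ seg f (i + m) n = seg f i (m + n) := by
  unfold seg
  rw [List.range_add, List.map_append, List.map_map]
  congr 1
  apply List.map_congr_left
  intro k _
  simp [Function.comp, Nat.add_assoc]

lemma seg_take (f : ℕ → α) (i m n : ℕ) (h : m ≤ n) :
    (seg f i n).take m = seg f i m := by
  have hs := seg_append f i m (n - m)
  rw [Nat.add_sub_cancel' h] at hs
  rw [← hs, List.take_left' (seg_length f i m)]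

lemma seg_drop (f : ℕ → α) (i m n : ℕ) (h : m ≤ n) :
    (seg f i n).drop m = seg f (i + m) (n - m) := by
  have hs := seg_append f i m (n - m)
  rw [Nat.add_sub_cancel' h] at hs
  rw [← hs, List.drop_left' (seg_length f i m)]

lemma period_mul {f : ℕ → α} {N : ℕ} (hf : ∀ a, f (a + N) = f a) (a q : ℕ) :
    f (a + q * N) = f a := by
  induction q with
  | zero => simp
  | succ q ih =>
      have : a + (q + 1) * N = a + q * N + N := by ring
      rw [this, hf, ih]

lemma perWord_period [Inhabited α] {v : List α} {N : ℕ} (hd : v.length ∣ N) (a : ℕ) :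
    perWord v (a + N) = perWord v a := by
  obtain ⟨m, rfl⟩ := hd
  unfold perWord
  rw [Nat.mul_comm, Nat.add_mul_mod_self_right]

lemma seg_rotate {f : ℕ → α} {N : ℕ} (hN : 0 < N) (hf : ∀ a, f (a + N) = f a) (j : ℕ) :
    (seg f 0 N).rotate j = seg f (j % N) N := by
  have hlen : (seg f 0 N).length = N := seg_length f 0 N
  rw [← List.rotate_mod, hlen]
  set r := j % N with hr
  have hrN : r < N := Nat.mod_lt _ hN
  rw [List.rotate_eq_drop_append_take (by rw [hlen]; exact hrN.le)]
  rw [seg_drop f 0 r N hrN.le, seg_take f 0 r N hrN.le]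
  have h1 : seg f 0 r = seg f (0 + r + (N - r)) r := by
    apply seg_congr
    intro k hk
    have : 0 + r + (N - r) + k = (0 + k) + N := by omega
    rw [this, hf]
  rw [h1, seg_append]
  congr 1 <;> omega

lemma fac_eq_of_shift {f g : ℕ → α} {r N : ℕ} (hN : 0 < N)
    (hf : ∀ a, f (a + N) = f a) (hg : ∀ a, g (a + N) = g a)
    (hagree : ∀ k < N, g k = f (r + k)) : Fac g = Fac f := by
  have hall : ∀ m, g m = f (r + m) := by
    intro m
    have h1 : g m = g (m % N) := by
      conv_lhs => rw [← Nat.mod_add_div' m N]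
      exact period_mul hg _ _
    have h2 : f (r + m) = f (r + m % N) := by
      conv_lhs => rw [← Nat.mod_add_div' m N, ← Nat.add_assoc]
      exact period_mul hf _ _
    rw [h1, h2]
    exact hagree _ (Nat.mod_lt _ hN)
  ext u
  constructor
  · rintro ⟨i, hi⟩
    replace hi : u = seg g i u.length := hi
    refine ⟨r + i, ?_⟩
    show u = seg f (r + i) u.length
    refine hi.trans (seg_congr fun k _ => ?_)
    rw [hall (i + k), ← Nat.add_assoc]
  · rintro ⟨p, hp⟩
    replace hp : u = seg f p u.length := hp
    have hrN : r ≤ r * N := Nat.le_mul_of_pos_right r hN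
    refine ⟨p + (r * N - r), ?_⟩
    show u = seg g (p + (r * N - r)) u.length
    refine hp.trans (seg_congr fun k _ => ?_).symm
    rw [hall (p + (r * N - r) + k)]
    have heq : r + (p + (r * N - r) + k) = (p + k) + r * N := by omega
    rw [heq, period_mul hf]

/-- The key membership: for a periodic word, the segment of length `N` (a multiple of the
period) has all its rotations among the factors. -/
lemma rotations_mem {v : List α} [Inhabited α] {N : ℕ} (hN : 0 < N) (hd : v.length ∣ N)
    (u' : List α) (h : (seg (perWord v) 0 N).IsRotated u') : u' ∈ Fac (perWord v) := by
  obtain ⟨j, rfl⟩ := h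
  rw [seg_rotate hN (fun a => perWord_period hd a) j]
  exact seg_mem_fac _ _ _

theorem perSet_finite_of_bounded_lie [Fintype α] [Inhabited α] (w : ℕ → α)
    (h : ∃ C : ℕ, ∀ n : ℕ, LieComplexity w n ≤ C) :
    (PerSet w).Finite := by
  obtain ⟨C, hC⟩ := h
  by_contra hinf
  have hinf' : (PerSet w).Infinite := hinf
  obtain ⟨T, hTsub, hTcard⟩ := hinf'.exists_subset_card_eq (C + 1)
  have hv : ∀ S : {x // x ∈ T}, ∃ v : List α,
      v ≠ [] ∧ (S : Set (List α)) = Fac (perWord v) ∧ (S : Set (List α)) ⊆ Fac w :=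
    fun S => hTsub S.2
  choose v hvne hvS hvsub using hv
  set N : ℕ := ∏ S : {x // x ∈ T}, (v S).length with hNdef
  have hdvd : ∀ S : {x // x ∈ T}, (v S).length ∣ N :=
    fun S => Finset.dvd_prod_of_mem _ (Finset.mem_univ S)
  have hN : 0 < N := Finset.prod_pos fun S _ => List.length_pos_iff.mpr (hvne S)
  set LieSet : Set (Quotient (List.IsRotated.setoid α)) :=
    {q | ∃ u : List α, Quotient.mk _ u = q ∧ u.length = N ∧ ∀ v, u.IsRotated v → v ∈ Fac w}
    with hLieSet
  have hfin : LieSet.Finite := by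
    apply Set.Finite.subset (((List.finite_length_eq α N).image (Quotient.mk _)))
    rintro q ⟨u, hu, hlen, -⟩
    exact ⟨u, hlen, hu⟩
  have hΦmem : ∀ S : {x // x ∈ T},
      (Quotient.mk (List.IsRotated.setoid α) (seg (perWord (v S)) 0 N)) ∈ LieSet := by
    intro S
    refine ⟨seg (perWord (v S)) 0 N, rfl, seg_length _ _ _, ?_⟩
    intro u' hu'
    apply hvsub S
    rw [hvS S]
    exact rotations_mem hN (hdvd S) u' hu'
  set Φ : {x // x ∈ T} → hfin.toFinset :=
    fun S => ⟨Quotient.mk _ (seg (perWord (v S)) 0 N), by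
      rw [Set.Finite.mem_toFinset]; exact hΦmem S⟩ with hΦ
  have hΦinj : Function.Injective Φ := by
    intro S₁ S₂ heq
    have heq' : Quotient.mk (List.IsRotated.setoid α) (seg (perWord (v S₁)) 0 N) =
        Quotient.mk _ (seg (perWord (v S₂)) 0 N) := by
      simpa [hΦ] using congrArg Subtype.val heq
    have hrot : (seg (perWord (v S₁)) 0 N).IsRotated (seg (perWord (v S₂)) 0 N) :=
      Quotient.exact heq'
    obtain ⟨j, hj⟩ := hrot
    rw [seg_rotate hN (fun a => perWord_period (hdvd S₁) a) j] at hj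
    set r := j % N
    have hagree : ∀ k < N, perWord (v S₂) k = perWord (v S₁) (r + k) := by
      intro k hk
      have := congrArg (fun l => l[k]?) hj
      simp only [seg, List.getElem?_map, List.getElem?_range, hk] at this
      simpa using this.symm
    have hfac : Fac (perWord (v S₂)) = Fac (perWord (v S₁)) :=
      fac_eq_of_shift hN (fun a => perWord_period (hdvd S₁) a)
        (fun a => perWord_period (hdvd S₂) a) hagree
    have : (S₁ : Set (List α)) = (S₂ : Set (List α)) := by
      rw [hvS S₁, hvS S₂, hfac]
    exact Subtype.ext this
  have hcard : Fintype.card {x // x ∈ T} ≤ Fintype.card hfin.toFinset :=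
    Fintype.card_le_of_injective Φ hΦinj
  rw [Fintype.card_coe, Fintype.card_coe, hTcard] at hcard
  have : LieComplexity w N ≤ C := hC N
  rw [LieComplexity, ← hLieSet] at this
  rw [Set.ncard_eq_toFinset_card LieSet hfin] at this
  omega
end

section
/- Let w be a right-infinite word over a finite alphabet. For every n ≥ 1, L_w(n) ≤ p_w(n) − p_w(n−1) + 1, where p_w is the factor complexity function and L_w is the Lie complexity function. -/
variable {α : Type*}

/-- The factor complexity: the number of distinct length-`n` factors of `w`. -/
noncomputable def FacComplexity (w : ℕ → α) (n : ℕ) : ℕ :=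
  Set.ncard {u : List α | u.length = n ∧ u ∈ Fac w}


namespace LieAux

def seg (w : ℕ → α) (i m : ℕ) : List α := (List.range m).map fun k => w (i + k)

@[simp] lemma seg_length (w : ℕ → α) (i m : ℕ) : (seg w i m).length = m := by
  simp [seg]

lemma factorAt_iff {w : ℕ → α} {i : ℕ} {u : List α} :
    FactorAt w i u ↔ u = seg w i u.length := Iff.rfl

lemma seg_mem_Fac (w : ℕ → α) (i m : ℕ) : seg w i m ∈ Fac w :=
  ⟨i, by rw [factorAt_iff, seg_length]⟩

lemma seg_succ_last (w : ℕ → α) (i m : ℕ) :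
    seg w i (m + 1) = seg w i m ++ [w (i + m)] := by
  simp [seg, List.range_succ]

lemma seg_succ_head (w : ℕ → α) (i m : ℕ) :
    seg w i (m + 1) = w i :: seg w (i + 1) m := by
  simp [seg, List.range_succ_eq_map, List.map_map, Function.comp_def]
  intro a _
  ring_nf

lemma eq_seg_of_mem {w : ℕ → α} {u : List α} (h : u ∈ Fac w) :
    ∃ i, u = seg w i u.length := h

@[simp] lemma seg_tail (w : ℕ → α) (i m : ℕ) :
    (seg w i (m + 1)).tail = seg w (i + 1) m := by
  rw [seg_succ_head]; rfl

@[simp] lemma seg_dropLast (w : ℕ → α) (i m : ℕ) :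
    (seg w i (m + 1)).dropLast = seg w i m := by
  rw [seg_succ_last, List.dropLast_concat]

lemma tail_mem_Fac {w : ℕ → α} {u : List α} (h : u ∈ Fac w) : u.tail ∈ Fac w := by
  obtain ⟨i, hi⟩ := eq_seg_of_mem h
  cases hu : u.length with
  | zero => rw [List.length_eq_zero_iff] at hu; simp [hu]; exact ⟨0, rfl⟩
  | succ k => rw [hi, hu, seg_tail]; exact seg_mem_Fac _ _ _

lemma dropLast_mem_Fac {w : ℕ → α} {u : List α} (h : u ∈ Fac w) : u.dropLast ∈ Fac w := by
  obtain ⟨i, hi⟩ := eq_seg_of_mem h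
  cases hu : u.length with
  | zero => rw [List.length_eq_zero_iff] at hu; simp [hu]; exact ⟨0, rfl⟩
  | succ k => rw [hi, hu, seg_dropLast]; exact seg_mem_Fac _ _ _

lemma dropLast_rotate_one {l : List α} (hl : l ≠ []) :
    (l.rotate 1).dropLast = l.tail := by
  cases l with
  | nil => simp at hl
  | cons a s => rw [List.rotate_cons_succ, List.rotate_zero, List.dropLast_concat]; rfl

lemma rotate_cancel {l : List α} {m : ℕ} (hl : l.length = m + 1) :
    (l.rotate 1).rotate m = l := by
  rw [List.rotate_rotate]
  rw [show 1 + m = m + 1 by ring, ← hl, List.rotate_length]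

lemma rotate_cancel' {l : List α} {m : ℕ} (hl : l.length = m + 1) :
    (l.rotate m).rotate 1 = l := by
  rw [List.rotate_rotate, ← hl, List.rotate_length]

lemma isRotated_rotate (l : List α) (n : ℕ) : l.IsRotated (l.rotate n) := ⟨n, rfl⟩



noncomputable def circmap (E V : Type*) [Fintype E] [DecidableEq V] (T H : E → V) :
    (E → ℚ) →ₗ[ℚ] (V → ℚ) where
  toFun f v := (∑ e ∈ Finset.univ.filter fun e => H e = v, f e)
      - ∑ e ∈ Finset.univ.filter fun e => T e = v, f e
  map_add' f g := by
    funext v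
    simp only [Pi.add_apply, Finset.sum_add_distrib]
    ring
  map_smul' c f := by
    funext v
    simp only [Pi.smul_apply, smul_eq_mul, RingHom.id_apply, ← Finset.mul_sum]
    ring

lemma circmap_apply {E V : Type*} [Fintype E] [DecidableEq V] (T H : E → V) (f : E → ℚ)
    (v : V) :
    circmap E V T H f v = (∑ e ∈ Finset.univ.filter fun e => H e = v, f e)
      - ∑ e ∈ Finset.univ.filter fun e => T e = v, f e := rfl

lemma circmap_single {E V : Type*} [Fintype E] [DecidableEq E] [DecidableEq V]
    (T H : E → V) (e : E) :
    circmap E V T H (Pi.single e 1) = Pi.single (H e) 1 - Pi.single (T e) 1 := by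
  funext v
  rw [circmap_apply, Pi.sub_apply]
  have h1 : ∀ s : Finset E, (∑ e' ∈ s, Pi.single e (1 : ℚ) e') = if e ∈ s then 1 else 0 := by
    intro s
    simp only [Pi.single_apply]
    rw [Finset.sum_ite_eq' s e (fun _ => (1:ℚ))]
  rw [h1, h1]
  simp only [Finset.mem_filter, Finset.mem_univ, true_and, Pi.single_apply]
  congr 1 <;> simp [eq_comm]

lemma abstract_bound {E V I : Type*} [Fintype E] [Fintype V] [Fintype I]
    [DecidableEq E] [DecidableEq V] [DecidableEq I]
    (T H : E → V) (Ew : ℕ → E)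
    (hchain : ∀ j, T (Ew (j + 1)) = H (Ew j))
    (hsurj : ∀ v, ∃ j, v = T (Ew j))
    (Y : I → E → ℚ)
    (hY1 : ∀ i : I, ∃ e : E, Y i e = 1 ∧ ∀ i', i' ≠ i → Y i' e = 0)
    (hcirc : ∀ i v, (∑ e ∈ Finset.univ.filter fun e => H e = v, Y i e)
        = ∑ e ∈ Finset.univ.filter fun e => T e = v, Y i e) :
    Fintype.card I + Fintype.card V ≤ Fintype.card E + 1 := by
  classical
  set d := circmap E V T H with hd
  set v0 : V := T (Ew 0) with hv0
  -- the range of d contains all differences of vertex indicators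
  have hrange1 : ∀ j, (Pi.single (T (Ew j)) 1 - Pi.single v0 1 : V → ℚ) ∈ LinearMap.range d := by
    intro j
    induction j with
    | zero => rw [← hv0, sub_self]; exact Submodule.zero_mem _
    | succ j ih =>
      have heq : (Pi.single (T (Ew (j+1))) 1 - Pi.single v0 1 : V → ℚ)
          = (Pi.single (H (Ew j)) 1 - Pi.single (T (Ew j)) 1)
            + (Pi.single (T (Ew j)) 1 - Pi.single v0 1) := by
        rw [hchain j]; abel
      rw [heq]
      exact Submodule.add_mem _ ⟨Pi.single (Ew j) 1, circmap_single T H (Ew j)⟩ ih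
  have hmemR : ∀ v : V, (Pi.single v 1 - Pi.single v0 1 : V → ℚ) ∈ LinearMap.range d := by
    intro v; obtain ⟨j, rfl⟩ := hsurj v; exact hrange1 j
  -- an independent family inside the range
  set famR : {v : V // v ≠ v0} → (V → ℚ) := fun v => Pi.single v.1 1 - Pi.single v0 1 with hfamR
  have hindR : LinearIndependent ℚ famR := by
    rw [Fintype.linearIndependent_iff]
    intro g hg i
    have h1 := congrFun hg i.1
    rw [Finset.sum_apply] at h1
    simp only [hfamR, Pi.smul_apply, Pi.sub_apply, Pi.single_apply, smul_eq_mul,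
      Pi.zero_apply] at h1
    have h2 : ∀ j : {v : V // v ≠ v0},
        g j * ((if (i : V) = (j : V) then (1:ℚ) else 0) - (if (i : V) = v0 then 1 else 0))
          = if j = i then g j else 0 := by
      intro j
      rw [if_neg i.2]
      by_cases h : j = i
      · subst h; simp
      · rw [if_neg h, if_neg (fun hc => h (Subtype.ext hc.symm))]
        ring
    rw [Finset.sum_congr rfl (fun j _ => h2 j), Finset.sum_ite_eq' Finset.univ i g] at h1
    simpa using h1
  have hspanR : Submodule.span ℚ (Set.range famR) ≤ LinearMap.range d := by
    rw [Submodule.span_le]; rintro _ ⟨v, rfl⟩; exact hmemR v.1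
  have hR : Fintype.card {v : V // v ≠ v0} ≤ Module.finrank ℚ (LinearMap.range d) := by
    calc Fintype.card {v : V // v ≠ v0}
        = Module.finrank ℚ (Submodule.span ℚ (Set.range famR)) := (finrank_span_eq_card hindR).symm
      _ ≤ _ := Submodule.finrank_mono hspanR
  have hcV : Fintype.card {v : V // v ≠ v0} = Fintype.card V - 1 := by
    have e1 : Fintype.card {v : V // v ≠ v0} = Fintype.card {v : V // ¬ (v = v0)} :=
      Fintype.card_congr (Equiv.subtypeEquivRight fun _ => Iff.rfl)
    rw [e1, Fintype.card_subtype_compl, Fintype.card_subtype_eq]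
  -- the kernel contains the independent family Y
  have hindK : LinearIndependent ℚ Y := by
    rw [Fintype.linearIndependent_iff]
    intro g hg i
    obtain ⟨e, he1, he0⟩ := hY1 i
    have h1 := congrFun hg e
    rw [Finset.sum_apply] at h1
    simp only [Pi.smul_apply, smul_eq_mul, Pi.zero_apply] at h1
    rw [Finset.sum_eq_single i (fun b _ hb => by rw [he0 b hb, mul_zero])
      (fun h => absurd (Finset.mem_univ i) h)] at h1
    rwa [he1, mul_one] at h1
  have hYker : ∀ i, Y i ∈ LinearMap.ker d := by
    intro i
    rw [LinearMap.mem_ker]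
    funext v
    rw [hd, circmap_apply, hcirc i v, sub_self]; rfl
  have hspanK : Submodule.span ℚ (Set.range Y) ≤ LinearMap.ker d := by
    rw [Submodule.span_le]; rintro _ ⟨i, rfl⟩; exact hYker i
  have hK : Fintype.card I ≤ Module.finrank ℚ (LinearMap.ker d) := by
    calc Fintype.card I
        = Module.finrank ℚ (Submodule.span ℚ (Set.range Y)) := (finrank_span_eq_card hindK).symm
      _ ≤ _ := Submodule.finrank_mono hspanK
  have hrn := LinearMap.finrank_range_add_finrank_ker d
  rw [Module.finrank_fintype_fun_eq_card] at hrn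
  have hVpos : 0 < Fintype.card V := Fintype.card_pos_iff.mpr ⟨v0⟩
  omega


lemma key [Fintype α] (w : ℕ → α) (m : ℕ) :
    {q : Quotient (List.IsRotated.setoid α) |
      ∃ u : List α, Quotient.mk _ u = q ∧ u.length = m + 1 ∧
        ∀ v, u.IsRotated v → v ∈ Fac w}.ncard
      + {u : List α | u.length = m ∧ u ∈ Fac w}.ncard
    ≤ {u : List α | u.length = m + 1 ∧ u ∈ Fac w}.ncard + 1 := by
  classical
  have hEfin : {u : List α | u.length = m + 1 ∧ u ∈ Fac w}.Finite :=
    (List.finite_length_eq α (m + 1)).subset fun u hu => hu.1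
  have hVfin : {u : List α | u.length = m ∧ u ∈ Fac w}.Finite :=
    (List.finite_length_eq α m).subset fun u hu => hu.1
  have hSfin : {q : Quotient (List.IsRotated.setoid α) |
      ∃ u : List α, Quotient.mk _ u = q ∧ u.length = m + 1 ∧
        ∀ v, u.IsRotated v → v ∈ Fac w}.Finite := by
    apply (hEfin.image (Quotient.mk _)).subset
    rintro q ⟨u, h1, h2, h3⟩
    exact ⟨u, ⟨h2, h3 u (List.IsRotated.refl u)⟩, h1⟩
  rw [Set.ncard_eq_toFinset_card _ hEfin, Set.ncard_eq_toFinset_card _ hVfin,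
    Set.ncard_eq_toFinset_card _ hSfin]
  set EF := hEfin.toFinset with hEF
  set VF := hVfin.toFinset with hVF
  set SF := hSfin.toFinset with hSF
  rw [← Fintype.card_coe EF, ← Fintype.card_coe VF, ← Fintype.card_coe SF]
  -- membership unfolding
  have memE : ∀ e : {x // x ∈ EF}, e.1.length = m + 1 ∧ e.1 ∈ Fac w := fun e =>
    hEfin.mem_toFinset.mp e.2
  -- head and tail maps
  have hHmem : ∀ e : {x // x ∈ EF}, e.1.tail ∈ VF := by
    intro e
    obtain ⟨hl, hf⟩ := memE e
    exact hVfin.mem_toFinset.mpr ⟨by simp [hl], tail_mem_Fac hf⟩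
  have hTmem : ∀ e : {x // x ∈ EF}, e.1.dropLast ∈ VF := by
    intro e
    obtain ⟨hl, hf⟩ := memE e
    exact hVfin.mem_toFinset.mpr ⟨by simp [hl], dropLast_mem_Fac hf⟩
  set H : {x // x ∈ EF} → {x // x ∈ VF} := fun e => ⟨e.1.tail, hHmem e⟩ with hHdef
  set T : {x // x ∈ EF} → {x // x ∈ VF} := fun e => ⟨e.1.dropLast, hTmem e⟩ with hTdef
  -- the walk along w
  have hEwmem : ∀ j, seg w j (m + 1) ∈ EF := fun j =>
    hEfin.mem_toFinset.mpr ⟨seg_length w j (m + 1), seg_mem_Fac w j (m + 1)⟩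
  set Ew : ℕ → {x // x ∈ EF} := fun j => ⟨seg w j (m + 1), hEwmem j⟩ with hEwdef
  -- representatives of the classes
  have memS : ∀ q : {x // x ∈ SF}, ∃ u : List α,
      Quotient.mk (List.IsRotated.setoid α) u = q.1 ∧ u.length = m + 1 ∧
        ∀ v, u.IsRotated v → v ∈ Fac w := fun q => hSfin.mem_toFinset.mp q.2
  set rep : {x // x ∈ SF} → List α := fun q => (memS q).choose with hrepdef
  have hrep : ∀ q, Quotient.mk (List.IsRotated.setoid α) (rep q) = q.1 ∧
      (rep q).length = m + 1 ∧ ∀ v, (rep q).IsRotated v → v ∈ Fac w := fun q =>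
    (memS q).choose_spec
  have hrepE : ∀ q, rep q ∈ EF := fun q =>
    hEfin.mem_toFinset.mpr ⟨(hrep q).2.1, (hrep q).2.2 _ (List.IsRotated.refl _)⟩
  set Y : {x // x ∈ SF} → {x // x ∈ EF} → ℚ :=
    fun q e => if (rep q).IsRotated e.1 then 1 else 0 with hYdef
  refine abstract_bound T H Ew ?_ ?_ Y ?_ ?_
  · -- chain
    intro j
    apply Subtype.ext
    show (seg w (j + 1) (m + 1)).dropLast = (seg w j (m + 1)).tail
    rw [seg_dropLast, seg_tail]
  · -- surjectivity on vertices
    intro v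
    obtain ⟨hl, hf⟩ := hVfin.mem_toFinset.mp v.2
    obtain ⟨i, hi⟩ := eq_seg_of_mem hf
    rw [hl] at hi
    refine ⟨i, Subtype.ext ?_⟩
    show v.1 = (seg w i (m + 1)).dropLast
    rw [seg_dropLast]
    exact hi
  · -- private coordinates for independence
    intro q
    refine ⟨⟨rep q, hrepE q⟩, ?_, ?_⟩
    · simp only [hYdef]
      rw [if_pos (List.IsRotated.refl _)]
    · intro q' hq'
      simp only [hYdef]
      rw [if_neg]
      intro hrot
      apply hq'
      apply Subtype.ext
      rw [← (hrep q').1, ← (hrep q).1]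
      exact Quotient.sound hrot
  · -- circulation condition
    intro q v
    have hA : ∀ e : {x // x ∈ EF}, (rep q).IsRotated e.1 → e.1.rotate 1 ∈ EF := by
      intro e hrot
      have hl := (memE e).1
      exact hEfin.mem_toFinset.mpr ⟨by simp [hl],
        (hrep q).2.2 _ (hrot.trans (isRotated_rotate e.1 1))⟩
    have hB : ∀ e : {x // x ∈ EF}, (rep q).IsRotated e.1 → e.1.rotate m ∈ EF := by
      intro e hrot
      have hl := (memE e).1
      exact hEfin.mem_toFinset.mpr ⟨by simp [hl],
        (hrep q).2.2 _ (hrot.trans (isRotated_rotate e.1 m))⟩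
    have hne : ∀ e : {x // x ∈ EF}, e.1 ≠ [] := by
      intro e he
      have hl := (memE e).1
      rw [he] at hl
      simp at hl
    simp only [hYdef]
    rw [Finset.sum_boole, Finset.sum_boole]
    norm_cast
    rw [Finset.filter_filter, Finset.filter_filter]
    refine Finset.card_bij'
      (fun e he => ⟨e.1.rotate 1, hA e (Finset.mem_filter.mp he).2.2⟩)
      (fun e he => ⟨e.1.rotate m, hB e (Finset.mem_filter.mp he).2.2⟩)
      ?_ ?_ ?_ ?_
    · -- maps into the T-side filter
      intro e he
      obtain ⟨-, hHv, hrot⟩ := Finset.mem_filter.mp he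
      refine Finset.mem_filter.mpr ⟨Finset.mem_univ _, ?_, hrot.trans (isRotated_rotate e.1 1)⟩
      apply Subtype.ext
      show (e.1.rotate 1).dropLast = v.1
      rw [dropLast_rotate_one (hne e)]
      exact congrArg Subtype.val hHv
    · -- maps back into the H-side filter
      intro e he
      obtain ⟨-, hTv, hrot⟩ := Finset.mem_filter.mp he
      refine Finset.mem_filter.mpr ⟨Finset.mem_univ _, ?_, hrot.trans (isRotated_rotate e.1 m)⟩
      apply Subtype.ext
      show (e.1.rotate m).tail = v.1
      have h1 : ((e.1.rotate m).rotate 1).dropLast = (e.1.rotate m).tail :=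
        dropLast_rotate_one (by
          intro hc
          apply hne e
          have := congrArg List.length hc
          simp only [List.length_rotate] at this
          exact List.length_eq_zero_iff.mp this)
      rw [rotate_cancel' (memE e).1] at h1
      rw [← h1]
      exact congrArg Subtype.val hTv
    · intro e he
      apply Subtype.ext
      show (e.1.rotate 1).rotate m = e.1
      exact rotate_cancel (memE e).1
    · intro e he
      apply Subtype.ext
      show (e.1.rotate m).rotate 1 = e.1
      exact rotate_cancel' (memE e).1

end LieAux

theorem lie_le_complexity_diff [Fintype α] (w : ℕ → α) (n : ℕ) (hn : 1 ≤ n) :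
    LieComplexity w n ≤ FacComplexity w n - FacComplexity w (n - 1) + 1 := by
  obtain ⟨m, rfl⟩ : ∃ m, n = m + 1 := ⟨n - 1, by omega⟩
  have hkey := LieAux.key w m
  unfold LieComplexity FacComplexity
  simp only [Nat.add_sub_cancel]
  omega
end

section
/- If a right-infinite word w over a finite alphabet has linear factor complexity (i.e., p_w(n) ≤ An + B for some constants A, B and all n), then the Lie complexity L_w(n) is bounded above by a constant independent of n. -/
variable {α : Type*}

namespace LieBS

/-! ### Windows of an infinite word -/

/-- The window of length `l` of `w` starting at position `i`. -/
def win (w : ℕ → α) (i l : ℕ) : List α := (List.range l).map fun k => w (i + k)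

@[simp] lemma length_win (w : ℕ → α) (i l : ℕ) : (win w i l).length = l := by
  simp [win]

lemma getElem_win (w : ℕ → α) (i l t : ℕ) (h : t < (win w i l).length) :
    (win w i l)[t] = w (i + t) := by
  simp [win]

lemma win_mem_fac (w : ℕ → α) (i l : ℕ) : win w i l ∈ Fac w := by
  refine ⟨i, ?_⟩
  show win w i l = (List.range (win w i l).length).map fun k => w (i + k)
  rw [length_win]
  rfl

lemma mem_fac_iff {w : ℕ → α} {u : List α} : u ∈ Fac w ↔ ∃ i, u = win w i u.length :=
  Iff.rfl

lemma win_succ (w : ℕ → α) (i l : ℕ) : win w i (l + 1) = win w i l ++ [w (i + l)] := by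
  simp [win, List.range_succ]

lemma win_entry_eq {f g : ℕ → α} {j j' l : ℕ} (h : win f j l = win g j' l)
    {t : ℕ} (ht : t < l) : f (j + t) = g (j' + t) := by
  have h1 : (win f j l)[t]'(by simpa using ht) = (win g j' l)[t]'(by simpa using ht) := by
    congr 1
  rwa [getElem_win, getElem_win] at h1

lemma win_eq_of_entries {f g : ℕ → α} {j j' l : ℕ}
    (h : ∀ t < l, f (j + t) = g (j' + t)) : win f j l = win g j' l := by
  apply List.ext_getElem (by simp)
  intro t h1 h2
  rw [getElem_win, getElem_win]
  exact h t (by simpa using h1)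

lemma win_take (w : ℕ → α) (i l s : ℕ) (hs : s ≤ l) : (win w i l).take s = win w i s := by
  apply List.ext_getElem (by simp [hs])
  intro t h1 h2
  rw [List.getElem_take, getElem_win, getElem_win]

lemma fac_take {w : ℕ → α} {u : List α} (h : u ∈ Fac w) (s : ℕ) : u.take s ∈ Fac w := by
  obtain ⟨i, hi⟩ := mem_fac_iff.mp h
  rcases le_or_gt s u.length with hs | hs
  · rw [hi, win_take w i u.length s hs]
    exact win_mem_fac w i s
  · rw [List.take_of_length_le (le_of_lt hs)]
    exact h

lemma exists_ext {w : ℕ → α} {u : List α} (h : u ∈ Fac w) : ∃ b, u ++ [b] ∈ Fac w := by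
  obtain ⟨i, hi⟩ := mem_fac_iff.mp h
  refine ⟨w (i + u.length), ?_⟩
  nth_rewrite 1 [hi]
  rw [← win_succ]
  exact win_mem_fac w i (u.length + 1)

/-! ### Right special factors and counting -/

/-- `x` is a right-special factor of `w`. -/
def IsRS (w : ℕ → α) (x : List α) : Prop :=
  ∃ b c : α, b ≠ c ∧ x ++ [b] ∈ Fac w ∧ x ++ [c] ∈ Fac w

def FacLen (w : ℕ → α) (k : ℕ) : Set (List α) := {u | u.length = k ∧ u ∈ Fac w}

def RSLen (w : ℕ → α) (k : ℕ) : Set (List α) := {u | u.length = k ∧ IsRS w u}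

lemma facComplexity_eq (w : ℕ → α) (k : ℕ) : FacComplexity w k = (FacLen w k).ncard := rfl

lemma isRS_mem_fac {w : ℕ → α} {x : List α} (h : IsRS w x) : x ∈ Fac w := by
  obtain ⟨b, c, _, hb, _⟩ := h
  have := fac_take hb x.length
  rwa [List.take_left] at this

lemma finite_len [Fintype α] (k : ℕ) : {u : List α | u.length = k}.Finite := by
  apply Set.Finite.subset (Set.finite_range (fun f : Fin k → α => List.ofFn f))
  intro l hl
  simp only [Set.mem_setOf_eq] at hl
  refine ⟨fun i => l[(i : ℕ)]'(by rw [hl]; exact i.isLt), ?_⟩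
  apply List.ext_getElem (by simpa using hl.symm)
  intro t h1 h2
  simp

lemma finite_facLen [Fintype α] (w : ℕ → α) (k : ℕ) : (FacLen w k).Finite :=
  (finite_len k).subset fun _ hu => hu.1

lemma finite_RSLen [Fintype α] (w : ℕ → α) (k : ℕ) : (RSLen w k).Finite :=
  (finite_len k).subset fun _ hu => hu.1

lemma concat_cancel {v v' : List α} {a a' : α} (h : v ++ [a] = v' ++ [a'])
    (hl : v.length = v'.length) : v = v' ∧ a = a' := by
  obtain ⟨h1, h2⟩ := List.append_inj h hl
  exact ⟨h1, by simpa using h2⟩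

/-- The key counting step: `p(k) + #RS(k) ≤ p(k+1)`. -/
lemma card_step [Fintype α] (w : ℕ → α) (k : ℕ) :
    FacComplexity w k + (RSLen w k).ncard ≤ FacComplexity w (k + 1) := by
  classical
  haveI : Inhabited α := ⟨w 0⟩
  set ch : List α → α := fun v =>
    if h : v ∈ Fac w then Classical.choose (exists_ext h) else default with hch_def
  have hch : ∀ v, v ∈ Fac w → v ++ [ch v] ∈ Fac w := by
    intro v h
    simp only [hch_def, dif_pos h]
    exact Classical.choose_spec (exists_ext h)
  set ch2 : List α → α := fun v =>
    if h : IsRS w v then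
      (if ch v = Classical.choose h then Classical.choose (Classical.choose_spec h)
        else Classical.choose h)
    else default with hch2_def
  have hch2 : ∀ v, IsRS w v → (v ++ [ch2 v] ∈ Fac w ∧ ch2 v ≠ ch v) := by
    intro v h
    obtain ⟨hne, hb, hc⟩ := Classical.choose_spec (Classical.choose_spec h)
    simp only [hch2_def, dif_pos h]
    by_cases he : ch v = Classical.choose h
    · rw [if_pos he]
      refine ⟨hc, ?_⟩
      rw [he]
      exact hne.symm
    · rw [if_neg he]
      exact ⟨hb, fun hcon => he hcon.symm⟩
  set Im1 : Set (List α) := (fun v => v ++ [ch v]) '' (FacLen w k) with hIm1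
  set Im2 : Set (List α) := (fun v => v ++ [ch2 v]) '' (RSLen w k) with hIm2
  have hinj1 : Set.InjOn (fun v => v ++ [ch v]) (FacLen w k) := by
    intro v hv v' hv' he
    exact (concat_cancel he (by rw [hv.1, hv'.1])).1
  have hinj2 : Set.InjOn (fun v => v ++ [ch2 v]) (RSLen w k) := by
    intro v hv v' hv' he
    exact (concat_cancel he (by rw [hv.1, hv'.1])).1
  have hc1 : Im1.ncard = FacComplexity w k := by
    rw [hIm1, Set.ncard_image_of_injOn hinj1, facComplexity_eq]
  have hc2 : Im2.ncard = (RSLen w k).ncard := by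
    rw [hIm2, Set.ncard_image_of_injOn hinj2]
  have hdisj : Disjoint Im1 Im2 := by
    rw [Set.disjoint_left]
    rintro x ⟨v, hv, rfl⟩ ⟨v', hv', he⟩
    obtain ⟨rfl, he2⟩ := concat_cancel he.symm (by rw [hv'.1, hv.1])
    exact (hch2 v hv'.2).2 he2.symm
  have hsub : Im1 ∪ Im2 ⊆ FacLen w (k + 1) := by
    rintro x (⟨v, hv, rfl⟩ | ⟨v, hv, rfl⟩)
    · exact ⟨by simp [hv.1], hch v hv.2⟩
    · exact ⟨by simp [hv.1], (hch2 v hv.2).1⟩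
  have hfin1 : Im1.Finite := ((finite_facLen w k).image _)
  have hfin2 : Im2.Finite := ((finite_RSLen w k).image _)
  calc FacComplexity w k + (RSLen w k).ncard = Im1.ncard + Im2.ncard := by rw [hc1, hc2]
    _ = (Im1 ∪ Im2).ncard := (Set.ncard_union_eq hdisj hfin1 hfin2).symm
    _ ≤ (FacLen w (k + 1)).ncard := Set.ncard_le_ncard hsub (finite_facLen w (k + 1))
    _ = FacComplexity w (k + 1) := rfl

lemma fac_mono [Fintype α] (w : ℕ → α) : Monotone (FacComplexity w) := by
  apply monotone_nat_of_le_succ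
  intro k
  have := card_step w k
  omega

/-! ### Periodic sequences and Fine--Wilf -/

lemma per_mul {f : ℕ → α} {p : ℕ} (hf : ∀ t, f (t + p) = f t) :
    ∀ k t, f (t + k * p) = f t := by
  intro k
  induction k with
  | zero => simp
  | succ k ih =>
    intro t
    have : t + (k + 1) * p = (t + k * p) + p := by ring
    rw [this, hf, ih]

lemma per_mod {f : ℕ → α} {p : ℕ} (hf : ∀ t, f (t + p) = f t) (hp : 0 < p) :
    ∀ t, f t = f (t % p) := by
  intro t
  conv_lhs => rw [show t = t % p + (t / p) * p by rw [Nat.mod_add_div']]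
  rw [per_mul hf]

/-- Fine--Wilf lite: if `f` has period `p`, `g` has period `q`, and the shifted
sequences agree on a window of length at least `p + q`, they agree everywhere. -/
lemma fine_wilf {f g : ℕ → α} {p q j j' L : ℕ} (hp : 0 < p) (hq : 0 < q)
    (hf : ∀ t, f (t + p) = f t) (hg : ∀ t, g (t + q) = g t)
    (hL : p + q ≤ L) (agr : ∀ t < L, f (j + t) = g (j' + t)) :
    ∀ t, f (j + t) = g (j' + t) := by
  set F : ℕ → α := fun t => f (j + t) with hF_def
  set G : ℕ → α := fun t => g (j' + t) with hG_def
  have hFp : ∀ t, F (t + p) = F t := by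
    intro t
    show f (j + (t + p)) = f (j + t)
    rw [show j + (t + p) = (j + t) + p by ring, hf]
  have hGq : ∀ t, G (t + q) = G t := by
    intro t
    show g (j' + (t + q)) = g (j' + t)
    rw [show j' + (t + q) = (j' + t) + q by ring, hg]
  have agr' : ∀ t < L, F t = G t := agr
  have hGmod : ∀ t, G t = G (t % q) := per_mod hGq hq
  -- G has period p as well
  have hGp : ∀ t, G (t + p) = G t := by
    intro t
    have h1 : (t + p) % q = (t % q + p) % q := by
      conv_lhs => rw [show t + p = t % q + q * (t / q) + p by rw [Nat.mod_add_div]]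
      rw [show t % q + q * (t / q) + p = t % q + p + q * (t / q) by ring]
      rw [Nat.add_mul_mod_self_left]
    have h2 : t % q + p < L := by
      have := Nat.mod_lt t hq
      omega
    calc G (t + p) = G ((t + p) % q) := hGmod _
      _ = G ((t % q + p) % q) := by rw [h1]
      _ = G (t % q + p) := (hGmod _).symm
      _ = F (t % q + p) := (agr' _ h2).symm
      _ = F (t % q) := hFp _
      _ = G (t % q) := agr' _ (by have := Nat.mod_lt t hq; omega)
      _ = G t := (hGmod t).symm
  intro t
  calc F t = F (t % p) := per_mod hFp hp t
    _ = G (t % p) := agr' _ (by have := Nat.mod_lt t hp; omega)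
    _ = G t := ((per_mod hGp hp) t).symm

/-! ### Windows of the periodization of a list -/

/-- The periodization of a list `u`. -/
def seqOf (u : List α) (d : α) : ℕ → α := fun t => u.getD (t % u.length) d

lemma seqOf_getElem {u : List α} {d : α} (hu : 0 < u.length) (t : ℕ) :
    seqOf u d t = u[t % u.length]'(Nat.mod_lt t hu) := by
  simp [seqOf, List.getD_eq_getElem?_getD, List.getElem?_eq_getElem (Nat.mod_lt t hu)]

lemma seqOf_per {u : List α} {d : α} : ∀ t, seqOf u d (t + u.length) = seqOf u d t := by
  intro t
  simp [seqOf, Nat.add_mod_right]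

lemma mod_add_mod_right (t s n : ℕ) : (t + s % n) % n = (t + s) % n := by
  conv_rhs => rw [show t + s = t + s % n + n * (s / n) by
    rw [Nat.add_assoc, Nat.mod_add_div]]
  rw [Nat.add_mul_mod_self_left]

lemma mod_add_mod_left (t s n : ℕ) : (t % n + s) % n = (t + s) % n := by
  rw [Nat.add_comm (t % n) s, mod_add_mod_right, Nat.add_comm s t]

lemma win_seqOf_eq_rotate {u : List α} {d : α} (hu : 0 < u.length) (s : ℕ) :
    win (seqOf u d) s u.length = u.rotate (s % u.length) := by
  apply List.ext_getElem (by simp)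
  intro t h1 h2
  rw [getElem_win, List.getElem_rotate]
  rw [seqOf_getElem hu]
  congr 1
  rw [mod_add_mod_right, Nat.add_comm s t]

/-- Rotation period transfers to the periodization. -/
lemma seqOf_rotate_per {u : List α} {d : α} {p : ℕ} (hu : 0 < u.length)
    (hrot : u.rotate p = u) : ∀ t, seqOf u d (t + p) = seqOf u d t := by
  intro t
  have h1 : ∀ k (hk : k < u.length),
      u[(k + p) % u.length]'(Nat.mod_lt _ hu) = u[k]'hk := by
    intro k hk
    have hA : (u.rotate p)[k]? = u[(k + p) % u.length]? := List.getElem?_rotate hk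
    rw [hrot] at hA
    rw [List.getElem?_eq_getElem hk, List.getElem?_eq_getElem (Nat.mod_lt _ hu)] at hA
    exact (Option.some.inj hA).symm
  rw [seqOf_getElem hu, seqOf_getElem hu]
  have h3 := h1 (t % u.length) (Nat.mod_lt t hu)
  have h2 : (t % u.length + p) % u.length = (t + p) % u.length :=
    mod_add_mod_left t p u.length
  convert h3 using 2
  exact h2.symm

/-! ### Eventual periodicity -/

/-- `w` is eventually periodic. -/
def EvPer (w : ℕ → α) : Prop := ∃ P, 0 < P ∧ ∃ i₀, ∀ t, i₀ ≤ t → w (t + P) = w t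

/-- Key dichotomy: if all `m`-windows of an `n`-periodic sequence `f` are factors of `w`,
and no `m`-window nor `(m-1)`-window of `f` is right-special, then `w` is
eventually periodic. -/
lemma evPer_of_forced {w f : ℕ → α} {n m : ℕ} (hn : 0 < n) (hm : 2 ≤ m)
    (hper : ∀ t, f (t + n) = f t) (hwin : ∀ j, win f j m ∈ Fac w)
    (hnoRS : ∀ j l, (l = m ∨ l = m - 1) → ¬ IsRS w (win f j l)) : EvPer w := by
  have force : ∀ j i, win f j m = win w i m → w (i + m) = f (j + m) := by
    intro j i hji
    by_contra hne
    apply hnoRS (j + 1) (m - 1) (Or.inr rfl)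
    refine ⟨w (i + m), f (j + m), hne, ?_, ?_⟩
    · -- win f (j+1) (m-1) ++ [w (i+m)] = win w (i+1) m ∈ Fac w
      have he : win f (j + 1) (m - 1) = win w (i + 1) (m - 1) := by
        apply win_eq_of_entries
        intro t ht
        have := win_entry_eq hji (t := t + 1) (by omega)
        rw [show j + 1 + t = j + (t + 1) by ring, show i + 1 + t = i + (t + 1) by ring]
        exact this
      rw [he]
      have h2 : win w (i + 1) (m - 1) ++ [w (i + 1 + (m - 1))] = win w (i + 1) m := by
        rw [← win_succ]
        congr 1
        omega
      rw [show i + m = i + 1 + (m - 1) by omega, h2]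
      exact win_mem_fac w (i + 1) m
    · have h2 : win f (j + 1) (m - 1) ++ [f (j + 1 + (m - 1))] = win f (j + 1) m := by
        rw [← win_succ]
        congr 1
        omega
      rw [show j + m = j + 1 + (m - 1) by omega, h2]
      exact hwin (j + 1)
  obtain ⟨i₀, hi₀⟩ := mem_fac_iff.mp (hwin 0)
  rw [length_win] at hi₀
  have key : ∀ s, w (i₀ + s) = f s := by
    intro s
    induction s using Nat.strong_induction_on with
    | _ s IH =>
      by_cases hs : s < m
      · have := win_entry_eq hi₀.symm (t := s) hs
        simpa using this
      · have hwineq : win f (s - m) m = win w (i₀ + (s - m)) m := by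
          apply win_eq_of_entries
          intro r hr
          have := IH ((s - m) + r) (by omega)
          rw [← Nat.add_assoc] at this
          exact this.symm
        have := force (s - m) (i₀ + (s - m)) hwineq
        rw [show i₀ + (s - m) + m = i₀ + s by omega, show s - m + m = s by omega] at this
        exact this
  refine ⟨n, hn, i₀, fun t ht => ?_⟩
  have h1 := key (t - i₀ + n)
  have h2 := key (t - i₀)
  rw [show i₀ + (t - i₀ + n) = t + n by omega] at h1
  rw [show i₀ + (t - i₀) = t by omega] at h2
  rw [h1, hper, h2]

/-- For an eventually periodic word, the factor complexity is at most `i₀ + P`. -/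
lemma fac_bound_of_evPer [Fintype α] {w : ℕ → α} (h : EvPer w) :
    ∃ C : ℕ, ∀ n, FacComplexity w n ≤ C := by
  classical
  obtain ⟨P, hP, i₀, hper⟩ := h
  refine ⟨i₀ + P, fun n => ?_⟩
  have hwin_reduce : ∀ i, ∃ i' < i₀ + P, win w i n = win w i' n := by
    intro i
    induction i using Nat.strong_induction_on with
    | _ i IH =>
      by_cases hi : i < i₀ + P
      · exact ⟨i, hi, rfl⟩
      · have hstep : win w i n = win w (i - P) n := by
          apply win_eq_of_entries
          intro t ht
          have := hper (i - P + t) (by omega)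
          rw [show i - P + t + P = i + t by omega] at this
          exact this
        obtain ⟨i', hi', he⟩ := IH (i - P) (by omega)
        exact ⟨i', hi', hstep.trans he⟩
  have hocc : ∀ u ∈ FacLen w n, ∃ i < i₀ + P, u = win w i n := by
    intro u hu
    obtain ⟨i, hi⟩ := mem_fac_iff.mp hu.2
    rw [hu.1] at hi
    obtain ⟨i', hi', he⟩ := hwin_reduce i
    exact ⟨i', hi', hi.trans he⟩
  have hocc' : ∀ u, ∃ i, (u ∈ FacLen w n → (i < i₀ + P ∧ u = win w i n)) := by
    intro u
    by_cases hu : u ∈ FacLen w n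
    · obtain ⟨i, h1, h2⟩ := hocc u hu
      exact ⟨i, fun _ => ⟨h1, h2⟩⟩
    · exact ⟨0, fun hcon => absurd hcon hu⟩
  choose F hF using hocc'
  rw [facComplexity_eq]
  have := Set.ncard_le_ncard_of_injOn F (t := ↑(Finset.range (i₀ + P)))
    (fun u hu => by
      simp only [Finset.coe_range, Set.mem_Iio]
      exact (hF u hu).1)
    (fun u hu u' hu' he => by
      rw [(hF u hu).2, (hF u' hu').2, he])
    (Finset.range (i₀ + P)).finite_toSet
  rwa [Set.ncard_coe_finset, Finset.card_range] at this

/-! ### The set of Lie classes -/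

def ClassSet (w : ℕ → α) (n : ℕ) : Set (Quotient (List.IsRotated.setoid α)) :=
  {q | ∃ u : List α, Quotient.mk _ u = q ∧ u.length = n ∧ ∀ v, u.IsRotated v → v ∈ Fac w}

lemma lieComplexity_eq (w : ℕ → α) (n : ℕ) : LieComplexity w n = (ClassSet w n).ncard := rfl

open Classical in
/-- A choice of representative for each class. -/
noncomputable def wit (w : ℕ → α) (n : ℕ) (q : Quotient (List.IsRotated.setoid α)) :
    List α :=
  if h : q ∈ ClassSet w n then Classical.choose h else []

lemma wit_spec {w : ℕ → α} {n : ℕ} {q : Quotient (List.IsRotated.setoid α)}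
    (h : q ∈ ClassSet w n) :
    Quotient.mk _ (wit w n q) = q ∧ (wit w n q).length = n ∧
      ∀ v, (wit w n q).IsRotated v → v ∈ Fac w := by
  unfold wit
  rw [dif_pos h]
  exact Classical.choose_spec h

lemma wit_mem_facLen {w : ℕ → α} {n : ℕ} {q : Quotient (List.IsRotated.setoid α)}
    (h : q ∈ ClassSet w n) : wit w n q ∈ FacLen w n := by
  obtain ⟨_, h2, h3⟩ := wit_spec h
  exact ⟨h2, h3 _ (List.IsRotated.refl _)⟩

lemma wit_injOn (w : ℕ → α) (n : ℕ) : Set.InjOn (wit w n) (ClassSet w n) := by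
  intro q hq q' hq' he
  rw [← (wit_spec hq).1, ← (wit_spec hq').1, he]

lemma finite_classSet [Fintype α] (w : ℕ → α) (n : ℕ) : (ClassSet w n).Finite :=
  Set.Finite.of_finite_image
    ((finite_facLen w n).subset (Set.image_subset_iff.mpr fun _ hq =>
      wit_mem_facLen hq)) (wit_injOn w n)

lemma lie_le_fac [Fintype α] (w : ℕ → α) (n : ℕ) :
    LieComplexity w n ≤ FacComplexity w n := by
  rw [lieComplexity_eq, facComplexity_eq]
  exact Set.ncard_le_ncard_of_injOn (wit w n) (fun q hq => wit_mem_facLen hq)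
    (wit_injOn w n) (finite_facLen w n)

/-! ### Pigeonhole: a level with few right-special factors -/

lemma exists_good_m [Fintype α] (w : ℕ → α) {A B n : ℕ}
    (hp : ∀ k, FacComplexity w k ≤ A * k + B) (hn : 100 ≤ n) :
    ∃ m, n / 2 + 1 ≤ m ∧ m ≤ n ∧
      (RSLen w (m - 1)).ncard + (RSLen w m).ncard ≤ 100 * (A + B + 1) := by
  by_contra hcon
  push_neg at hcon
  set K := 100 * (A + B + 1) with hK
  set a := n / 2 + 1 with ha
  have hstep : ∀ m, a ≤ m → m ≤ n →
      FacComplexity w (m - 1) + (K + 1) ≤ FacComplexity w (m + 1) := by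
    intro m h1 h2
    have hs1 := card_step w (m - 1)
    have hs2 := card_step w m
    have hsum := hcon m h1 h2
    have hm1 : m - 1 + 1 = m := by omega
    rw [hm1] at hs1
    omega
  have hchain : ∀ j, a + 2 * j ≤ n →
      (j + 1) * (K + 1) ≤ FacComplexity w (a + 2 * j + 1) := by
    intro j
    induction j with
    | zero =>
      intro hj
      have h := hstep a le_rfl (by omega)
      rw [show a + 2 * 0 + 1 = a + 1 by ring]
      omega
    | succ j ih =>
      intro hj
      have ihv := ih (by omega)
      have h := hstep (a + 2 * j + 2) (by omega) (by omega)
      rw [show a + 2 * j + 2 - 1 = a + 2 * j + 1 by omega,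
        show a + 2 * j + 2 + 1 = a + 2 * (j + 1) + 1 by ring] at h
      have e : (j + 1 + 1) * (K + 1) = (j + 1) * (K + 1) + (K + 1) := by ring
      rw [e]
      exact le_trans (Nat.add_le_add_right ihv _) h
  have hTle : a + 2 * ((n - a) / 2) ≤ n := by omega
  have hch := hchain ((n - a) / 2) hTle
  have hmono := fac_mono w (show a + 2 * ((n - a) / 2) + 1 ≤ n + 1 by omega)
  have hfinal : ((n - a) / 2 + 1) * (K + 1) ≤ A * (n + 1) + B :=
    le_trans hch (le_trans hmono (hp (n + 1)))
  have hT8 : n / 8 ≤ (n - a) / 2 + 1 := by omega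
  have h1 : (n / 8) * (K + 1) ≤ ((n - a) / 2 + 1) * (K + 1) :=
    Nat.mul_le_mul_right _ hT8
  have h2 : (n / 8) * (K + 1) ≤ A * n + A + B := by
    have e : A * (n + 1) + B = A * n + A + B := by ring
    rw [e] at hfinal
    exact le_trans h1 hfinal
  have hd12 : 12 ≤ n / 8 := by omega
  have hdn : n ≤ 8 * (n / 8) + 7 := by omega
  have hAn : A * n ≤ 8 * (A * (n / 8)) + 7 * A := by
    calc A * n ≤ A * (8 * (n / 8) + 7) := Nat.mul_le_mul_left A hdn
      _ = 8 * (A * (n / 8)) + 7 * A := by ring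
  have e1 : (n / 8) * (K + 1) = 100 * (A * (n / 8)) + 100 * (B * (n / 8)) + 101 * (n / 8) := by
    rw [hK]; ring
  rw [e1] at h2
  have hA_le : A ≤ A * (n / 8) := Nat.le_mul_of_pos_right A (by omega)
  have hB_le : B ≤ B * (n / 8) := Nat.le_mul_of_pos_right B (by omega)
  obtain ⟨x, hx⟩ : ∃ x, A * (n / 8) = x := ⟨_, rfl⟩
  rw [hx] at h2 hAn hA_le
  obtain ⟨y, hy⟩ : ∃ y, B * (n / 8) = y := ⟨_, rfl⟩
  rw [hy] at h2 hB_le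
  obtain ⟨z, hz⟩ : ∃ z, A * n = z := ⟨_, rfl⟩
  rw [hz] at h2 hAn
  clear hx hy hz
  omega

/-! ### The main bound for non-eventually-periodic words -/

lemma rotate_sub_cancel {u : List α} {a b : ℕ} (hab : a ≤ b) (ha : a ≤ u.length)
    (h : u.rotate a = u.rotate b) : u.rotate (b - a) = u := by
  have hvc : (u.rotate a).rotate (b - a) = u.rotate a := by
    rw [List.rotate_rotate, show a + (b - a) = b by omega, ← h]
  have h1 : (u.rotate a).rotate (u.length - a) = u := by
    rw [List.rotate_rotate, show a + (u.length - a) = u.length by omega, List.rotate_length]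
  have h4 := congrArg (fun l : List α => l.rotate (u.length - a)) hvc
  simp only [List.rotate_rotate] at h4
  rw [show a + (b - a) + (u.length - a) = u.length + (b - a) by omega,
    show a + (u.length - a) = u.length by omega, List.rotate_length] at h4
  rw [← List.rotate_rotate, List.rotate_length] at h4
  exact h4

lemma main_bound [Fintype α] (w : ℕ → α) {A B : ℕ}
    (hp : ∀ k, FacComplexity w k ≤ A * k + B) (hev : ¬ EvPer w) {n : ℕ} (hn : 100 ≤ n) :
    LieComplexity w n ≤ 100 * (A + B + 1) + (8 * A + 8 * B + 8) := by
  classical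
  obtain ⟨m, hm1, hm2, hmRS⟩ := exists_good_m w hp hn
  set Q := ClassSet w n with hQdef
  have hn0 : 0 < n := by omega
  set Small : Quotient (List.IsRotated.setoid α) → Prop :=
    fun q => ∃ p, 0 < p ∧ p ≤ n / 8 ∧ (wit w n q).rotate p = wit w n q with hSmall
  have hQfin := finite_classSet w n
  have hfinS : {q ∈ Q | Small q}.Finite := hQfin.subset (Set.sep_subset _ _)
  have hfinL : {q ∈ Q | ¬ Small q}.Finite := hQfin.subset (Set.sep_subset _ _)
  have hcard : LieComplexity w n ≤ {q ∈ Q | Small q}.ncard + {q ∈ Q | ¬ Small q}.ncard := by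
    rw [lieComplexity_eq]
    have hsplit : Q ⊆ {q ∈ Q | Small q} ∪ {q ∈ Q | ¬ Small q} := by
      intro q hq
      by_cases h : Small q
      · exact Or.inl ⟨hq, h⟩
      · exact Or.inr ⟨hq, h⟩
    exact le_trans (Set.ncard_le_ncard hsplit (hfinS.union hfinL)) (Set.ncard_union_le _ _)
  -- ### Bound for the large classes ###
  have hlarge : {q ∈ Q | ¬ Small q}.ncard ≤ 8 * A + 8 * B + 8 := by
    have hcount : {q ∈ Q | ¬ Small q}.ncard * (n / 8 + 1) ≤ FacComplexity w n := by
      have hmaps : ∀ pr ∈ hfinL.toFinset ×ˢ Finset.range (n / 8 + 1),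
          (wit w n pr.1).rotate pr.2 ∈ (finite_facLen w n).toFinset := by
        rintro ⟨q, i⟩ hpr
        rw [Finset.mem_product, Set.Finite.mem_toFinset] at hpr
        obtain ⟨⟨hqQ, -⟩, -⟩ := hpr
        obtain ⟨h1, h2, h3⟩ := wit_spec hqQ
        rw [Set.Finite.mem_toFinset]
        exact ⟨by simp [h2], h3 _ ⟨i, rfl⟩⟩
      have hinj : Set.InjOn (fun pr : Quotient (List.IsRotated.setoid α) × ℕ =>
          (wit w n pr.1).rotate pr.2)
          ↑(hfinL.toFinset ×ˢ Finset.range (n / 8 + 1)) := by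
        rintro ⟨q, i⟩ hqi ⟨q', i'⟩ hqi' he
        simp only [Finset.coe_product, Set.mem_prod, Finset.mem_coe,
          Set.Finite.mem_toFinset, Finset.mem_range] at hqi hqi'
        obtain ⟨⟨hqQ, hqL⟩, hi⟩ := hqi
        obtain ⟨⟨hqQ', hqL'⟩, hi'⟩ := hqi'
        simp only at he
        have hmk : ∀ (r : Quotient (List.IsRotated.setoid α)) (hr : r ∈ Q) (k : ℕ),
            Quotient.mk (List.IsRotated.setoid α) ((wit w n r).rotate k) = r := by
          intro r hr k
          exact Eq.trans (Quot.sound (List.IsRotated.symm ⟨k, rfl⟩)) ((wit_spec hr).1)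
        have hqq : q = q' := by
          rw [← hmk q hqQ i, ← hmk q' hqQ' i', he]
        subst hqq
        have hii : i = i' := by
          by_contra hne
          rcases Nat.lt_or_ge i i' with hlt | hge
          · have := rotate_sub_cancel (le_of_lt hlt)
              (by rw [(wit_spec hqQ).2.1]; omega) he
            exact hqL ⟨i' - i, by omega, by omega, this⟩
          · have hlt' : i' < i := by omega
            have := rotate_sub_cancel (le_of_lt hlt')
              (by rw [(wit_spec hqQ).2.1]; omega) he.symm
            exact hqL ⟨i - i', by omega, by omega, this⟩
        rw [hii]
      have hcc := Finset.card_le_card_of_injOn _ hmaps hinj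
      rw [Finset.card_product, Finset.card_range] at hcc
      rw [facComplexity_eq, Set.ncard_eq_toFinset_card _ (finite_facLen w n),
        Set.ncard_eq_toFinset_card _ hfinL]
      exact hcc
    by_contra hbig
    push_neg at hbig
    have hble : (8 * A + 8 * B + 8 + 1) * (n / 8 + 1) ≤
        {q ∈ Q | ¬ Small q}.ncard * (n / 8 + 1) :=
      Nat.mul_le_mul_right _ (by omega)
    have h2 := le_trans hble (le_trans hcount (hp n))
    have hdn : n ≤ 8 * (n / 8) + 7 := by omega
    have hAn : A * n ≤ 8 * (A * (n / 8)) + 7 * A := by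
      calc A * n ≤ A * (8 * (n / 8) + 7) := Nat.mul_le_mul_left A hdn
        _ = 8 * (A * (n / 8)) + 7 * A := by ring
    have e1 : (8 * A + 8 * B + 8 + 1) * (n / 8 + 1) =
        8 * (A * (n / 8)) + 8 * (B * (n / 8)) + 9 * (n / 8) + 8 * A + 8 * B + 9 := by ring
    rw [e1] at h2
    obtain ⟨x, hx⟩ : ∃ x, A * (n / 8) = x := ⟨_, rfl⟩
    rw [hx] at h2 hAn
    obtain ⟨y, hy⟩ : ∃ y, B * (n / 8) = y := ⟨_, rfl⟩
    rw [hy] at h2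
    obtain ⟨z, hz⟩ : ∃ z, A * n = z := ⟨_, rfl⟩
    rw [hz] at h2 hAn
    clear hx hy hz
    omega
  -- ### Bound for the small classes ###
  have hsmall : {q ∈ Q | Small q}.ncard ≤ 100 * (A + B + 1) := by
    have hexRS : ∀ q, ∃ x : List α, (q ∈ {q ∈ Q | Small q} →
        ((x.length = m - 1 ∨ x.length = m) ∧ IsRS w x ∧
          ∃ j, x = win (seqOf (wit w n q) (w 0)) j x.length)) := by
      intro q
      by_cases hq : q ∈ {q ∈ Q | Small q}
      · obtain ⟨hqQ, -⟩ := hq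
        obtain ⟨h1, h2, h3⟩ := wit_spec hqQ
        have hu0 : 0 < (wit w n q).length := by omega
        have hper : ∀ t, seqOf (wit w n q) (w 0) (t + n) = seqOf (wit w n q) (w 0) t := by
          intro t
          have := seqOf_per (u := wit w n q) (d := w 0) t
          rwa [h2] at this
        have hwinmem : ∀ j, win (seqOf (wit w n q) (w 0)) j m ∈ Fac w := by
          intro j
          have hw1 := win_seqOf_eq_rotate (u := wit w n q) (d := w 0) hu0 j
          have hw2 := win_take (seqOf (wit w n q) (w 0)) j (wit w n q).length m (by omega)
          rw [← hw2, hw1]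
          exact fac_take (h3 _ ⟨_, rfl⟩) m
        have hex : ∃ j l, (l = m ∨ l = m - 1) ∧ IsRS w (win (seqOf (wit w n q) (w 0)) j l) := by
          by_contra hcon2
          push_neg at hcon2
          exact hev (evPer_of_forced hn0 (by omega) hper hwinmem
            (fun j l hl => hcon2 j l hl))
        obtain ⟨j, l, hl, hRS⟩ := hex
        refine ⟨win (seqOf (wit w n q) (w 0)) j l, fun _ => ⟨?_, hRS, ⟨j, ?_⟩⟩⟩
        · rcases hl with h | h
          · right; simp [h]
          · left; simp [h]
        · rw [length_win]
      · exact ⟨[], fun hcon => absurd hcon hq⟩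
    choose ψ hψ using hexRS
    have hmaps : ∀ q ∈ {q ∈ Q | Small q}, ψ q ∈ RSLen w (m - 1) ∪ RSLen w m := by
      intro q hq
      obtain ⟨hlen, hRS, -⟩ := hψ q hq
      rcases hlen with h | h
      · exact Or.inl ⟨h, hRS⟩
      · exact Or.inr ⟨h, hRS⟩
    have hinj : Set.InjOn ψ {q ∈ Q | Small q} := by
      intro q hq q' hq' he
      obtain ⟨hqQ, p, hp0, hp8, hprot⟩ := hq
      obtain ⟨hqQ', p', hp0', hp8', hprot'⟩ := hq'
      obtain ⟨h1, h2, h3⟩ := wit_spec hqQ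
      obtain ⟨h1', h2', h3'⟩ := wit_spec hqQ'
      obtain ⟨hlen, hRS, j, hxq⟩ := hψ q ⟨hqQ, p, hp0, hp8, hprot⟩
      obtain ⟨hlen', hRS', j', hxq'⟩ := hψ q' ⟨hqQ', p', hp0', hp8', hprot'⟩
      have hu0 : 0 < (wit w n q).length := by omega
      have hu0' : 0 < (wit w n q').length := by omega
      have hLL : (ψ q').length = (ψ q).length := by rw [he]
      have hwe : win (seqOf (wit w n q) (w 0)) j ((ψ q).length)
          = win (seqOf (wit w n q') (w 0)) j' ((ψ q).length) := by
        have e := he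
        rw [hxq] at e
        rw [hxq'] at e
        rwa [hLL] at e
      have agr : ∀ t < (ψ q).length,
          seqOf (wit w n q) (w 0) (j + t) = seqOf (wit w n q') (w 0) (j' + t) :=
        fun t ht => win_entry_eq hwe ht
      have hfp : ∀ t, seqOf (wit w n q) (w 0) (t + p) = seqOf (wit w n q) (w 0) t :=
        seqOf_rotate_per hu0 hprot
      have hfp' : ∀ t, seqOf (wit w n q') (w 0) (t + p') = seqOf (wit w n q') (w 0) t :=
        seqOf_rotate_per hu0' hprot'
      have hL : p + p' ≤ (ψ q).length := by
        rcases hlen with h | h <;> omega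
      have fw := fine_wilf hp0 hp0' hfp hfp' hL agr
      -- express wit q' as a window of seqOf (wit q)
      have hshift : ∀ t, seqOf (wit w n q') (w 0) t
          = seqOf (wit w n q) (w 0) (j + (j' * p' - j') + t) := by
        intro t
        have hj' : j' ≤ j' * p' := Nat.le_mul_of_pos_right j' hp0'
        have s1 : seqOf (wit w n q') (w 0) (t + j' * p') = seqOf (wit w n q') (w 0) t :=
          per_mul hfp' j' t
        have s2 : j' + (t + (j' * p' - j')) = t + j' * p' := by omega
        calc seqOf (wit w n q') (w 0) t
            = seqOf (wit w n q') (w 0) (t + j' * p') := s1.symm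
          _ = seqOf (wit w n q') (w 0) (j' + (t + (j' * p' - j'))) := by rw [s2]
          _ = seqOf (wit w n q) (w 0) (j + (t + (j' * p' - j'))) := (fw _).symm
          _ = seqOf (wit w n q) (w 0) (j + (j' * p' - j') + t) := by
              congr 1
              omega
      have e0 : wit w n q' = win (seqOf (wit w n q') (w 0)) 0 ((wit w n q').length) := by
        have h5 := win_seqOf_eq_rotate (u := wit w n q') (d := w 0) hu0' 0
        rw [Nat.zero_mod, List.rotate_zero] at h5
        exact h5.symm
      have hwit' : wit w n q' = win (seqOf (wit w n q) (w 0)) (j + (j' * p' - j'))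
          ((wit w n q').length) :=
        e0.trans (win_eq_of_entries (fun t _ => by rw [Nat.zero_add]; exact hshift t))
      rw [show (wit w n q').length = (wit w n q).length by rw [h2, h2']] at hwit'
      rw [win_seqOf_eq_rotate hu0 (j + (j' * p' - j'))] at hwit'
      rw [← h1, ← h1']
      exact Quot.sound ⟨(j + (j' * p' - j')) % (wit w n q).length, hwit'.symm⟩
    have := Set.ncard_le_ncard_of_injOn ψ hmaps hinj
      ((finite_RSLen w (m - 1)).union (finite_RSLen w m))
    exact le_trans this (le_trans (Set.ncard_union_le _ _) hmRS)
  omega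

end LieBS


theorem lie_bounded_of_linear_complexity [Fintype α] (w : ℕ → α)
    (h : ∃ A B : ℕ, ∀ n : ℕ, FacComplexity w n ≤ A * n + B) :
    ∃ C : ℕ, ∀ n : ℕ, LieComplexity w n ≤ C := by
  obtain ⟨A, B, hp⟩ := h
  by_cases hev : LieBS.EvPer w
  · obtain ⟨C, hC⟩ := LieBS.fac_bound_of_evPer hev
    exact ⟨C, fun n => le_trans (LieBS.lie_le_fac w n) (hC n)⟩
  · refine ⟨100 * (A + B + 1) + (8 * A + 8 * B + 8) + (100 * A + B), fun n => ?_⟩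
    by_cases hn : 100 ≤ n
    · exact le_trans (LieBS.main_bound w hp hev hn) (by omega)
    · have hle := le_trans (LieBS.lie_le_fac w n) (hp n)
      have hA : A * n ≤ A * 100 := Nat.mul_le_mul_left A (by omega)
      obtain ⟨x, hx⟩ : ∃ x, A * n = x := ⟨_, rfl⟩
      rw [hx] at hle hA
      clear hx
      omega
end

section
/- Let w be a right-infinite word over a finite alphabet with linear factor complexity. Then the set of primitive words y such that y^n is a factor of w for every n ≥ 1 is finite. -/
variable {α : Type*}

/-- `listPow y k` is the `k`-fold concatenation `y^k`. -/
def listPow (y : List α) : ℕ → List α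
  | 0 => []
  | n + 1 => y ++ listPow y n

/-- A nonempty word is primitive if it is not a proper power. -/
def Primitive (y : List α) : Prop :=
  y ≠ [] ∧ ∀ (z : List α) (k : ℕ), y = listPow z k → k = 1

/-!
If `w` is eventually `p`-periodic, a long power of a primitive word `y` inside the periodic tail
makes `y^ω` also `p`-periodic, and primitivity of `y` forces `|y| ∣ p`.

Otherwise, for every primitive `y` with unbounded exponent and every `m`, some length-`m` factor
of `y^ω` is right special: if none were, the letters following an occurrence of a prefix of `y^ω`
would be forced forever and `w` would be eventually `|y|`-periodic. A common factor of `y^ω` and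
`y'^ω` of length `≥ |y| + |y'|` gives `|y| ∣ |y'|` and `|y'| ∣ |y|`, so `K` primitive words of
distinct lengths yield `K` distinct right special factors of each large length `m`, whence
`p(m + 1) ≥ p(m) + K`. A linear bound `p(n) ≤ An + B` thus allows at most `A` distinct lengths.
-/

open Function

def window (f : ℕ → α) (i n : ℕ) : List α := (List.range n).map fun k => f (i + k)

@[simp] lemma length_window (f : ℕ → α) (i n : ℕ) : (window f i n).length = n := by
  simp [window]

@[simp] lemma getElem_window (f : ℕ → α) (i n k : ℕ) (hk : k < (window f i n).length) :
    (window f i n)[k] = f (i + k) := by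
  simp [window]

lemma window_eq_window_iff {f g : ℕ → α} {i j n : ℕ} :
    window f i n = window g j n ↔ ∀ k < n, f (i + k) = g (j + k) := by
  simp [window, List.map_inj_left]

lemma window_succ (f : ℕ → α) (i n : ℕ) : window f i (n + 1) = window f i n ++ [f (i + n)] := by
  simp [window, List.range_succ]

lemma window_add (f : ℕ → α) (i a b : ℕ) :
    window f i (a + b) = window f i a ++ window f (i + a) b := by
  simp [window, List.range_add, add_assoc]

lemma factorAt_iff_eq_window {w : ℕ → α} {i : ℕ} {u : List α} :
    FactorAt w i u ↔ u = window w i u.length :=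
  Iff.rfl

lemma window_mem_fac (w : ℕ → α) (i n : ℕ) : window w i n ∈ Fac w :=
  ⟨i, by rw [factorAt_iff_eq_window, length_window]⟩

lemma window_append_mem_fac (w : ℕ → α) (i n : ℕ) : window w i n ++ [w (i + n)] ∈ Fac w :=
  window_succ w i n ▸ window_mem_fac w i (n + 1)

lemma mem_fac_of_prefix {w : ℕ → α} {u v : List α} (huv : u <+: v) (hv : v ∈ Fac w) :
    u ∈ Fac w := by
  obtain ⟨i, hi⟩ := hv
  rw [factorAt_iff_eq_window] at hi
  refine ⟨i, factorAt_iff_eq_window.2 (List.ext_getElem (by simp) fun k hk _ => ?_)⟩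
  rw [getElem_window, huv.getElem hk, List.getElem_of_eq hi, getElem_window]

lemma exists_append_mem_fac {w : ℕ → α} {u : List α} (hu : u ∈ Fac w) :
    ∃ a, u ++ [a] ∈ Fac w := by
  obtain ⟨i, hi⟩ := hu
  rw [factorAt_iff_eq_window] at hi
  have := window_append_mem_fac w i u.length
  rw [← hi] at this
  exact ⟨_, this⟩

/-- The infinite word `y^ω`; the default letter `d` is read only when `y = []`. -/
def periodicExt (d : α) (y : List α) (k : ℕ) : α := y.getD (k % y.length) d

lemma periodicExt_periodic (d : α) (y : List α) : Periodic (periodicExt d y) y.length :=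
  fun k => by simp [periodicExt]

lemma window_periodicExt_length (d : α) (y : List α) : window (periodicExt d y) 0 y.length = y :=
  List.ext_getElem (by simp) fun k hk _ => by
    simp only [length_window] at hk
    simp [periodicExt, Nat.mod_eq_of_lt hk, List.getElem?_eq_getElem hk]

lemma listPow_eq_window (d : α) (y : List α) (n : ℕ) :
    listPow y n = window (periodicExt d y) 0 (n * y.length) := by
  induction n with
  | zero => simp [listPow, window]
  | succ n ih =>
    rw [listPow, ih, Nat.succ_mul, add_comm, window_add, window_periodicExt_length, zero_add]
    congr 1
    exact window_eq_window_iff.2 fun k _ => by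
      rw [zero_add, add_comm y.length, periodicExt_periodic]

lemma Function.Periodic.nat_mod {f : ℕ → α} {m n : ℕ} (hm : Periodic f m) (hn : Periodic f n) :
    Periodic f (n % m) := fun k =>
  calc f (k + n % m) = f (k + n % m + n / m * m) := (hm.nat_mul (n / m) _).symm
    _ = f (k + n) := by rw [add_assoc, Nat.mod_add_div']
    _ = f k := hn k

lemma Function.Periodic.nat_gcd {f : ℕ → α} {m n : ℕ} (hm : Periodic f m) (hn : Periodic f n) :
    Periodic f (m.gcd n) := by
  induction m, n using Nat.gcd.induction with
  | H0 n => rwa [Nat.gcd_zero_left]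
  | H1 m n _ ih => rw [Nat.gcd_rec]; exact ih (hm.nat_mod hn) hm

lemma Function.Periodic.of_eq_on_period {f : ℕ → α} {ℓ s q : ℕ} (hf : Periodic f ℓ) (hℓ : 0 < ℓ)
    (h : ∀ k < ℓ, f (s + k + q) = f (s + k)) : Periodic f q := by
  set g := fun k => f (s + k)
  have hg : Periodic g ℓ := fun k => by simp only [g, ← add_assoc, hf _]
  have hgq : Periodic g q := fun k =>
    calc g (k + q) = g ((k % ℓ + q) % ℓ) := by rw [Nat.mod_add_mod, hg.map_mod_nat]
      _ = g (k % ℓ + q) := hg.map_mod_nat _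
      _ = g (k % ℓ) := by simp only [g, ← add_assoc, h _ (Nat.mod_lt _ hℓ)]
      _ = g k := hg.map_mod_nat _
  obtain ⟨ℓ, rfl⟩ := Nat.exists_eq_add_one_of_ne_zero hℓ.ne'
  have hfg : ∀ x, f x = g (x + ℓ * s) := fun x => by
    rw [← hf.nat_mul s x]
    exact congrArg f (by push_cast; ring)
  intro k
  rw [hfg, hfg, add_right_comm, hgq]

lemma periodicExt_take {d : α} {y : List α} {g : ℕ} (hg : Periodic (periodicExt d y) g)
    (hg0 : 0 < g) (hgy : g ≤ y.length) : periodicExt d (y.take g) = periodicExt d y := by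
  funext k
  have hk : k % g < g := Nat.mod_lt _ hg0
  rw [← hg.map_mod_nat k, periodicExt, periodicExt, List.length_take_of_le hgy,
    Nat.mod_eq_of_lt (hk.trans_le hgy), List.getD_eq_getElem _ _ (by simpa [hgy] using hk),
    List.getD_eq_getElem _ _ (hk.trans_le hgy), List.getElem_take]

lemma Primitive.length_dvd_of_periodic {y : List α} (hy : Primitive y) {d : α} {q : ℕ}
    (hq : Periodic (periodicExt d y) q) : y.length ∣ q := by
  have hℓ : 0 < y.length := List.length_pos_of_ne_nil hy.1
  set g := y.length.gcd q
  have hgℓ : g ∣ y.length := Nat.gcd_dvd_left _ _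
  have hg0 : 0 < g := Nat.gcd_pos_of_pos_left _ hℓ
  have hg : Periodic (periodicExt d y) g := (periodicExt_periodic d y).nat_gcd hq
  have hpow : y = listPow (y.take g) (y.length / g) := by
    rw [listPow_eq_window d, periodicExt_take hg hg0 (Nat.le_of_dvd hℓ hgℓ),
      List.length_take_of_le (Nat.le_of_dvd hℓ hgℓ), Nat.div_mul_cancel hgℓ,
      window_periodicExt_length]
  have hℓg : y.length = g := by
    have := Nat.div_mul_cancel hgℓ
    rw [hy.2 _ _ hpow, one_mul] at this
    exact this.symm
  exact hℓg ▸ Nat.gcd_dvd_right _ _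

def HasUnboundedExponent (w : ℕ → α) (y : List α) : Prop := ∀ n : ℕ, 1 ≤ n → listPow y n ∈ Fac w

lemma HasUnboundedExponent.exists_eq_periodicExt {w : ℕ → α} {y : List α}
    (hyw : HasUnboundedExponent w y) (hy : y ≠ []) (d : α) (m : ℕ) :
    ∃ i, ∀ k < m, w (i + k) = periodicExt d y k := by
  obtain ⟨i, hi⟩ := hyw (m + 1) (Nat.le_add_left 1 m)
  have hm : m < (m + 1) * y.length := Nat.lt_of_lt_of_le (Nat.lt_succ_self m)
    (Nat.le_mul_of_pos_right _ (List.length_pos_of_ne_nil hy))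
  rw [factorAt_iff_eq_window, listPow_eq_window d, length_window, window_eq_window_iff] at hi
  exact ⟨i, fun k hk => by rw [← hi k (hk.trans hm), zero_add]⟩

def EventuallyPeriodic (w : ℕ → α) : Prop := ∃ N p, 0 < p ∧ Periodic (fun k => w (N + k)) p

lemma Primitive.length_dvd_of_periodic_tail {w : ℕ → α} {y : List α} (hy : Primitive y)
    (hyw : HasUnboundedExponent w y) {N p : ℕ} (hp : Periodic (fun k => w (N + k)) p) :
    y.length ∣ p := by
  have hℓ : 0 < y.length := List.length_pos_of_ne_nil hy.1
  obtain ⟨i, hi⟩ := hyw.exists_eq_periodicExt hy.1 (w 0) (N + y.length + p)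
  refine hy.length_dvd_of_periodic
    ((periodicExt_periodic (w 0) y).of_eq_on_period hℓ (s := N) fun k hk => ?_)
  rw [← hi _ (by lia), ← hi _ (by lia)]
  convert hp (i + k) using 2 <;> ring

lemma Primitive.length_dvd_of_window_eq {y y' : List α} (hy : Primitive y) {d : α} {s s' m : ℕ}
    (hm : y.length + y'.length ≤ m)
    (h : window (periodicExt d y) s m = window (periodicExt d y') s' m) :
    y.length ∣ y'.length := by
  have hℓ : 0 < y.length := List.length_pos_of_ne_nil hy.1
  rw [window_eq_window_iff] at h
  refine hy.length_dvd_of_periodic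
    ((periodicExt_periodic d y).of_eq_on_period hℓ (s := s) fun k hk => ?_)
  rw [add_assoc, h _ (by lia), h _ (by lia), ← add_assoc, periodicExt_periodic]

def RightSpecial (w : ℕ → α) (u : List α) : Prop :=
  ∃ a b, a ≠ b ∧ u ++ [a] ∈ Fac w ∧ u ++ [b] ∈ Fac w

lemma HasUnboundedExponent.exists_rightSpecial_window {w : ℕ → α} {y : List α}
    (hyw : HasUnboundedExponent w y) (hw : ¬EventuallyPeriodic w) (hy : y ≠ []) (d : α) (m : ℕ) :
    ∃ s, RightSpecial w (window (periodicExt d y) s m) := by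
  by_contra! hns
  have hℓ : 0 < y.length := List.length_pos_of_ne_nil hy
  have hpe := periodicExt_periodic d y
  obtain ⟨i, hi⟩ := hyw.exists_eq_periodicExt hy d m
  obtain ⟨j, hj⟩ := hyw.exists_eq_periodicExt hy d (m + y.length)
  have hj_mod : ∀ s k, k ≤ m → w (j + s % y.length + k) = periodicExt d y (s + k) :=
    fun s k hk => by
      rw [add_assoc, hj _ (by have := Nat.mod_lt s hℓ; lia), ← hpe.map_mod_nat, Nat.mod_add_mod,
        hpe.map_mod_nat]
  -- Each window of `y^ω` also occurs at `j + s % |y|` and is not right special, so the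
  -- occurrence of `y^ω` at `i` extends letter by letter.
  have key : ∀ t, w (i + t) = periodicExt d y t := by
    intro t
    induction t using Nat.strong_induction_on with | _ t ih => ?_
    rcases lt_or_ge t m with ht | ht
    · exact hi t ht
    obtain ⟨s, rfl⟩ : ∃ s, t = s + m := ⟨t - m, by lia⟩
    have hi_s : window w (i + s) m = window (periodicExt d y) s m :=
      window_eq_window_iff.2 fun k hk => by rw [add_assoc]; exact ih _ (by lia)
    have hj_s : window w (j + s % y.length) m = window (periodicExt d y) s m :=
      window_eq_window_iff.2 fun k hk => hj_mod s k hk.le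
    by_contra hne
    refine hns s ⟨_, _, hne, ?_, ?_⟩
    · simpa [hi_s, add_assoc] using window_append_mem_fac w (i + s) m
    · simpa [hj_s, hj_mod s m le_rfl] using window_append_mem_fac w (j + s % y.length) m
  exact hw ⟨i, y.length, hℓ, by simpa only [← funext key] using hpe⟩

lemma facComplexity_add_ncard_rightSpecial_le [Finite α] (w : ℕ → α) (m : ℕ) :
    FacComplexity w m + {u | u.length = m ∧ RightSpecial w u}.ncard ≤ FacComplexity w (m + 1) := by
  classical
  have hfin : ∀ n, {u : List α | u.length = n ∧ u ∈ Fac w}.Finite := fun n =>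
    (List.finite_length_eq α n).subset fun _ hu => hu.1
  set F := (hfin m).toFinset
  set F' := (hfin (m + 1)).toFinset
  have hR : {u | u.length = m ∧ RightSpecial w u} ⊆ {u | u.length = m ∧ u ∈ Fac w} :=
    fun u ⟨hu, _, _, _, ha, _⟩ => ⟨hu, mem_fac_of_prefix (List.prefix_append u _) ha⟩
  set R := ((hfin m).subset hR).toFinset
  have hRF : R ⊆ F := Set.Finite.toFinset_subset_toFinset.2 hR
  -- Count factors of length `m + 1` by their `dropLast`: every fibre over `F` is nonempty, and
  -- over a right special factor it has two elements.
  have hmaps : (F' : Set (List α)).MapsTo List.dropLast F := fun v hv => by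
    simp only [F', F, Set.Finite.coe_toFinset, Set.mem_ofPred_eq] at hv ⊢
    exact ⟨by simp [hv.1], mem_fac_of_prefix (List.dropLast_prefix v) hv.2⟩
  have hfiber : ∀ u ∈ F, ∀ a, u ++ [a] ∈ Fac w → u ++ [a] ∈ F'.filter (·.dropLast = u) := by
    intro u hu a ha
    simp only [F, F', Set.Finite.mem_toFinset, Finset.mem_filter] at hu ⊢
    simp [hu.1, ha]
  rw [FacComplexity, FacComplexity, Set.ncard_eq_toFinset_card _ (hfin m),
    Set.ncard_eq_toFinset_card _ (hfin (m + 1)), Set.ncard_eq_toFinset_card _ ((hfin m).subset hR),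
    Finset.card_eq_sum_card_fiberwise hmaps]
  calc F.card + R.card = ∑ u ∈ F, (1 + if u ∈ R then 1 else 0) := by
        rw [Finset.sum_add_distrib, Finset.sum_boole, Finset.filter_mem_eq_inter,
          Finset.inter_eq_right.2 hRF]
        simp
    _ ≤ ∑ u ∈ F, (F'.filter (·.dropLast = u)).card := Finset.sum_le_sum fun u hu => by
        split_ifs with huR
        · obtain ⟨-, a, b, hab, ha, hb⟩ := by simpa [R] using huR
          exact Finset.one_lt_card.2 ⟨_, hfiber u hu a ha, _, hfiber u hu b hb, by simpa using hab⟩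
        · obtain ⟨a, ha⟩ := exists_append_mem_fac ((Set.Finite.mem_toFinset _).1 hu).2
          exact Finset.card_pos.2 ⟨_, hfiber u hu a ha⟩

lemma card_le_ncard_rightSpecial [Finite α] {w : ℕ → α} (hw : ¬EventuallyPeriodic w)
    {Λ : Finset ℕ} (hΛ : ↑Λ ⊆ List.length '' {y | Primitive y ∧ HasUnboundedExponent w y})
    {m : ℕ} (hm : ∀ l ∈ Λ, 2 * l ≤ m) :
    Λ.card ≤ {u | u.length = m ∧ RightSpecial w u}.ncard := by
  choose! y hy hylen using fun l (hl : l ∈ Λ) => hΛ hl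
  choose! s hs using fun l (hl : l ∈ Λ) =>
    (hy l hl).2.exists_rightSpecial_window hw (hy l hl).1.1 (w 0) m
  rw [← Set.ncard_coe_finset]
  refine Set.ncard_le_ncard_of_injOn (fun l => window (periodicExt (w 0) (y l)) (s l) m)
    (fun l hl => ⟨length_window _ _ _, hs l hl⟩) (fun l hl l' hl' heq => ?_)
    ((List.finite_length_eq α m).subset fun _ hu => hu.1)
  have hlen : (y l).length + (y l').length ≤ m := by
    rw [hylen l hl, hylen l' hl']; linarith [hm l hl, hm l' hl']
  have h₁ := (hy l hl).1.length_dvd_of_window_eq hlen heq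
  have h₂ := (hy l' hl').1.length_dvd_of_window_eq (by lia) heq.symm
  rw [hylen l hl, hylen l' hl'] at h₁ h₂
  exact Nat.dvd_antisymm h₁ h₂

lemma le_of_increments_of_linear_bound {f : ℕ → ℕ} {c m₀ A B : ℕ}
    (hinc : ∀ m ≥ m₀, f m + c ≤ f (m + 1)) (hlin : ∀ n, f n ≤ A * n + B) : c ≤ A := by
  have hgrowth : ∀ k, c * k ≤ f (m₀ + k) := by
    intro k
    induction k with
    | zero => simp
    | succ k ih => rw [mul_add_one, ← add_assoc]; linarith [hinc (m₀ + k) (by lia)]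
  by_contra! hAc
  have := (hgrowth (A * m₀ + B + 1)).trans (hlin _)
  nlinarith [Nat.mul_le_mul_right (A * m₀ + B + 1) hAc]

theorem finitely_many_unbounded_exponent [Fintype α] (w : ℕ → α)
    (h : ∃ A B : ℕ, ∀ n : ℕ, FacComplexity w n ≤ A * n + B) :
    {y : List α | Primitive y ∧ ∀ n : ℕ, 1 ≤ n → listPow y n ∈ Fac w}.Finite := by
  obtain ⟨A, B, hAB⟩ := h
  suffices hbdd : BddAbove (List.length '' {y | Primitive y ∧ HasUnboundedExponent w y}) by
    obtain ⟨L, hL⟩ := hbdd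
    exact (List.finite_length_le α L).subset fun y hy => hL ⟨y, hy, rfl⟩
  by_cases hw : EventuallyPeriodic w
  · obtain ⟨N, p, hp, hpN⟩ := hw
    refine ⟨p, ?_⟩
    rintro _ ⟨y, ⟨hy, hyw⟩, rfl⟩
    exact Nat.le_of_dvd hp (hy.length_dvd_of_periodic_tail hyw hpN)
  · by_contra hunb
    obtain ⟨Λ, hΛ, hΛcard⟩ := (Set.infinite_of_not_bddAbove hunb).exists_subset_card_eq (A + 1)
    have hinc : ∀ m ≥ 2 * Λ.sup id, FacComplexity w m + (A + 1) ≤ FacComplexity w (m + 1) :=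
      fun m hm => calc
        _ ≤ FacComplexity w m + {u | u.length = m ∧ RightSpecial w u}.ncard :=
          hΛcard ▸ Nat.add_le_add_left (card_le_ncard_rightSpecial hw hΛ fun l hl =>
            (Nat.mul_le_mul_left 2 (Finset.le_sup (f := id) hl)).trans hm) _
        _ ≤ _ := facComplexity_add_ncard_rightSpecial_le w m
    have := le_of_increments_of_linear_bound hinc hAB
    lia
end

section
/- Let w be a right-infinite word over a finite alphabet, let A_w be its factor algebra over ℚ, let V_n be the span of the images of length-n factors of w in A_w, and let W_n ⊆ V_n be the span of all elements ab − ba where a, b are factors of w with |a| + |b| = n. Then L_w(n) = dim(V_n) − dim(W_n). -/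
variable {α : Type*}

/-- The relation defining the factor algebra: words that are not factors of `w`
are set to zero in the monoid algebra `ℚ⟨Σ*⟩`. -/
def FacAlgRel (w : ℕ → α) :
    MonoidAlgebra ℚ (FreeMonoid α) → MonoidAlgebra ℚ (FreeMonoid α) → Prop :=
  fun x y => ∃ u : FreeMonoid α, FreeMonoid.toList u ∉ Fac w ∧
    x = MonoidAlgebra.of ℚ (FreeMonoid α) u ∧ y = 0

/-- The factor algebra `A_w` of `w` over `ℚ`. -/
abbrev FacAlg (w : ℕ → α) := RingQuot (FacAlgRel w)

/-- The image in the factor algebra of a word `u`. -/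
noncomputable def facCls (w : ℕ → α) (u : List α) : FacAlg w :=
  RingQuot.mkAlgHom ℚ (FacAlgRel w) (MonoidAlgebra.of ℚ (FreeMonoid α) (FreeMonoid.ofList u))

/-- `V_n`: the span of the images of length-`n` factors of `w`. -/
noncomputable def Vspace (w : ℕ → α) (n : ℕ) : Submodule ℚ (FacAlg w) :=
  Submodule.span ℚ {x | ∃ u ∈ Fac w, u.length = n ∧ x = facCls w u}

/-- `W_n`: the span of commutators `ab - ba` with `a, b` factors of `w` and `|a|+|b| = n`. -/
noncomputable def Wspace (w : ℕ → α) (n : ℕ) : Submodule ℚ (FacAlg w) :=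
  Submodule.span ℚ {x | ∃ a ∈ Fac w, ∃ b ∈ Fac w, a.length + b.length = n ∧
    x = facCls w a * facCls w b - facCls w b * facCls w a}

/-!
If `x` and `y` are factors with `|x| + |y| = n`, then `xy - yx ∈ W_n`, so every factor `u = xy` of
length `n` is congruent modulo `W_n` to each of its rotations `yx`. Hence `u ∈ W_n` as soon as some
rotation of `u` is not a factor (that rotation is `0` in `A_w`), and `V_n / W_n` is spanned by one
representative of each rotation class all of whose members are factors. These representatives
are independent modulo `W_n`: sending such a word to its rotation class in the free `ℚ`-module
on rotation classes, and every other word to `0`, gives a well-defined linear map on `A_w` that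
kills `W_n`, because `ab` and `ba` are rotations of each other.
-/

theorem Submodule.finrank_map_mkQ_add_finrank {K V : Type*} [DivisionRing K] [AddCommGroup V]
    [Module K V] {p q : Submodule K V} (hpq : p ≤ q) [FiniteDimensional K q] :
    Module.finrank K (q.map p.mkQ) + Module.finrank K p = Module.finrank K q := by
  have h := LinearMap.finrank_range_add_finrank_ker (p.mkQ ∘ₗ q.subtype)
  rwa [LinearMap.range_comp, Submodule.range_subtype, LinearMap.ker_comp, Submodule.ker_mkQ,
    (Submodule.comapSubtypeEquivOfLe hpq).finrank_eq] at h

theorem Submodule.finrank_span_eq_natCard {K V ι : Type*} [DivisionRing K] [AddCommGroup V]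
    [Module K V] {v : ι → V} (hv : LinearIndependent K v) :
    Module.finrank K (Submodule.span K (Set.range v)) = Nat.card ι := by
  rw [Module.finrank, rank_span hv]
  exact Nat.card_range_of_injective hv.injective

theorem RingQuot.exists_linearMap_mkAlgHom {S A M : Type*} [CommSemiring S] [Semiring A]
    [Algebra S A] [AddCommMonoid M] [Module S M] {s : A → A → Prop} (f : A →ₗ[S] M)
    (hf : ∀ ⦃x y⦄, RingQuot.Rel s x y → f x = f y) :
    ∃ F : RingQuot s →ₗ[S] M, ∀ a, F (RingQuot.mkAlgHom S s a) = f a := by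
  have toQuot_mk : ∀ a, (RingQuot.mkAlgHom S s a).toQuot = Quot.mk _ a := fun a => by
    rw [RingQuot.mkAlgHom_def]; simp only [RingQuot.mkRingHom_def]; rfl
  let F₀ : RingQuot s → M := fun x => Quot.lift f hf x.toQuot
  have hF₀ : ∀ a, F₀ (RingQuot.mkAlgHom S s a) = f a := fun a => by
    simp only [F₀, toQuot_mk]
  have surj := RingQuot.mkAlgHom_surjective S s
  refine ⟨{ toFun := F₀, map_add' := ?_, map_smul' := ?_ }, hF₀⟩
  · intro x y
    obtain ⟨a, rfl⟩ := surj x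
    obtain ⟨b, rfl⟩ := surj y
    simp only [← map_add, hF₀]
  · intro r x
    obtain ⟨a, rfl⟩ := surj x
    simp only [← map_smul, hF₀, RingHom.id_apply]

theorem factorAt_iff_eq_map_range' {w : ℕ → α} {i : ℕ} {u : List α} :
    FactorAt w i u ↔ u = (List.range' i u.length).map w := by
  simp [FactorAt, List.range'_eq_map_range, Function.comp_def]

theorem mem_fac_of_isInfix {w : ℕ → α} {u v : List α} (huv : u <:+: v) (hv : v ∈ Fac w) :
    u ∈ Fac w := by
  obtain ⟨s, t, rfl⟩ := huv
  obtain ⟨i, hi⟩ := hv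
  rw [factorAt_iff_eq_map_range'] at hi
  refine ⟨i + s.length, factorAt_iff_eq_map_range'.2 ?_⟩
  have := congrArg (fun l => (l.drop s.length).take u.length) hi
  simp only [List.length_append] at this
  rw [← List.map_drop, ← List.map_take, List.drop_range', List.take_range'_of_length_ge (by omega),
    mul_one] at this
  simpa using this

section FactorAlgebra

variable {w : ℕ → α}

theorem facCls_append (u v : List α) : facCls w (u ++ v) = facCls w u * facCls w v := by
  simp only [facCls, ← map_mul]
  rfl

theorem facCls_eq_zero {u : List α} (hu : u ∉ Fac w) : facCls w u = 0 := by
  rw [facCls, RingQuot.mkAlgHom_rel ℚ ⟨FreeMonoid.ofList u, hu, rfl, rfl⟩, map_zero]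

variable {M : Type*} [AddCommGroup M] [Module ℚ M]

theorem exists_linearMap_facCls (g : List α → M) (hg : ∀ u ∉ Fac w, g u = 0) :
    ∃ F : FacAlg w →ₗ[ℚ] M, ∀ u, F (facCls w u) = g u := by
  let f := (MonoidAlgebra.basis (FreeMonoid α) ℚ).constr ℚ (fun u => g u.toList)
  have f_of : ∀ u, f (MonoidAlgebra.of ℚ _ u) = g u.toList := fun u =>
    (MonoidAlgebra.basis (FreeMonoid α) ℚ).constr_basis ℚ _ u
  have f_ideal : ∀ u, u.toList ∉ Fac w → ∀ c d, f (c * MonoidAlgebra.of ℚ _ u * d) = 0 := by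
    intro u hu c d
    induction c using MonoidAlgebra.induction_on with
    | of v =>
      induction d using MonoidAlgebra.induction_on with
      | of v' =>
        rw [← map_mul, ← map_mul, f_of, hg]
        exact fun h => hu (mem_fac_of_isInfix ⟨v.toList, v'.toList, by simp⟩ h)
      | add x y hx hy => rw [mul_add, map_add, hx, hy, add_zero]
      | smul r x hx => rw [mul_smul_comm, map_smul, hx, smul_zero]
    | add x y hx hy => rw [add_mul, add_mul, map_add, hx, hy, add_zero]
    | smul r x hx => rw [smul_mul_assoc, smul_mul_assoc, map_smul, hx, smul_zero]
  -- two-sided multiples, so that the induction passes through `mul_left` and `mul_right`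
  have f_rel : ∀ ⦃x y⦄, RingQuot.Rel (FacAlgRel w) x y → ∀ c d, f (c * x * d) = f (c * y * d) := by
    intro x y h
    induction h with
    | of h =>
      obtain ⟨u, hu, rfl, rfl⟩ := h
      intro c d
      rw [f_ideal u hu, mul_zero, zero_mul, map_zero]
    | add_left _ ih =>
      intro c d
      simp only [mul_add, add_mul, map_add, ih]
    | mul_left _ ih =>
      intro c d
      simp only [mul_assoc] at ih ⊢
      exact ih c _
    | mul_right _ ih =>
      intro c d
      simp only [← mul_assoc] at ih ⊢
      exact ih _ d
  obtain ⟨F, hF⟩ := RingQuot.exists_linearMap_mkAlgHom f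
    fun x y h => by simpa using f_rel h 1 1
  exact ⟨F, fun u => (hF _).trans (f_of _)⟩

end FactorAlgebra

def RotationsFac (w : ℕ → α) (u : List α) : Prop := ∀ v, u ~r v → v ∈ Fac w

section Commutators

variable {w : ℕ → α} {n : ℕ}

theorem RotationsFac.mem_fac {u : List α} (hu : RotationsFac w u) : u ∈ Fac w :=
  hu u (List.IsRotated.refl u)

theorem RotationsFac.of_isRotated {u v : List α} (hu : RotationsFac w u) (huv : u ~r v) :
    RotationsFac w v :=
  fun x hvx => hu x (huv.trans hvx)

theorem facCls_mem_vspace {u : List α} (hn : u.length = n) : facCls w u ∈ Vspace w n := by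
  by_cases hu : u ∈ Fac w
  · exact Submodule.subset_span ⟨u, hu, hn, rfl⟩
  · rw [facCls_eq_zero hu]
    exact zero_mem _

theorem facCls_append_sub_mem_wspace {u v : List α} (hu : u ∈ Fac w) (hv : v ∈ Fac w)
    (hn : u.length + v.length = n) : facCls w (u ++ v) - facCls w (v ++ u) ∈ Wspace w n := by
  rw [facCls_append, facCls_append]
  exact Submodule.subset_span ⟨u, hu, v, hv, hn, rfl⟩

theorem wspace_le_vspace : Wspace w n ≤ Vspace w n := by
  rw [Wspace, Submodule.span_le]
  rintro _ ⟨u, -, v, -, hn, rfl⟩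
  rw [← facCls_append, ← facCls_append]
  exact sub_mem (facCls_mem_vspace (by simpa)) (facCls_mem_vspace (by simp; omega))

theorem facCls_sub_mem_wspace_of_isRotated {u v : List α} (hu : u ∈ Fac w) (hn : u.length = n)
    (huv : u ~r v) : facCls w u - facCls w v ∈ Wspace w n := by
  obtain ⟨m, rfl⟩ := huv
  rw [List.rotate_eq_drop_append_take_mod]
  nth_rw 1 [← List.take_append_drop (m % u.length) u]
  exact facCls_append_sub_mem_wspace (mem_fac_of_isInfix (List.take_prefix _ u).isInfix hu)
    (mem_fac_of_isInfix (List.drop_suffix _ u).isInfix hu) (by simp; omega)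

theorem facCls_mem_wspace_of_not_rotationsFac {u : List α} (hn : u.length = n)
    (hu : ¬ RotationsFac w u) : facCls w u ∈ Wspace w n := by
  by_cases hfac : u ∈ Fac w
  · obtain ⟨v, huv, hv⟩ : ∃ v, u ~r v ∧ v ∉ Fac w := by simpa [RotationsFac] using hu
    simpa [facCls_eq_zero hv] using facCls_sub_mem_wspace_of_isRotated hfac hn huv
  · rw [facCls_eq_zero hfac]
    exact zero_mem _

end Commutators

def lieClasses (w : ℕ → α) (n : ℕ) : Set (Quotient (List.IsRotated.setoid α)) :=
  {q | ∃ u, Quotient.mk _ u = q ∧ u.length = n ∧ RotationsFac w u}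

theorem lieComplexity_eq_ncard (w : ℕ → α) (n : ℕ) :
    LieComplexity w n = (lieClasses w n).ncard :=
  rfl

theorem isRotated_out_mk (u : List α) : u ~r (Quotient.mk (List.IsRotated.setoid α) u).out :=
  (@Quotient.mk_out _ (List.IsRotated.setoid α) u).symm

section Counting

variable {w : ℕ → α} {n : ℕ}

theorem out_mem_lieClasses {q : Quotient (List.IsRotated.setoid α)} (hq : q ∈ lieClasses w n) :
    q.out.length = n ∧ RotationsFac w q.out := by
  obtain ⟨u, rfl, hn, hu⟩ := hq
  exact ⟨(isRotated_out_mk u).perm.length_eq ▸ hn, hu.of_isRotated (isRotated_out_mk u)⟩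

variable (w n) in
noncomputable def lieRep (q : lieClasses w n) : FacAlg w ⧸ Wspace w n :=
  (Wspace w n).mkQ (facCls w q.1.out)

theorem map_mkQ_vspace_eq_span_lieRep :
    (Vspace w n).map (Wspace w n).mkQ = Submodule.span ℚ (Set.range (lieRep w n)) := by
  rw [Vspace, Submodule.map_span]
  apply le_antisymm
  · rw [Submodule.span_le]
    rintro _ ⟨_, ⟨u, -, hn, rfl⟩, rfl⟩
    by_cases hu : RotationsFac w u
    · have hq : Quotient.mk _ u ∈ lieClasses w n := ⟨u, rfl, hn, hu⟩
      have hdiff := facCls_sub_mem_wspace_of_isRotated hu.mem_fac hn (isRotated_out_mk u)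
      rw [← Submodule.Quotient.eq] at hdiff
      exact Submodule.subset_span ⟨⟨_, hq⟩, hdiff.symm⟩
    · rw [Submodule.mkQ_apply, (Submodule.Quotient.mk_eq_zero _).2
        (facCls_mem_wspace_of_not_rotationsFac hn hu)]
      exact zero_mem _
  · apply Submodule.span_mono
    rintro _ ⟨q, rfl⟩
    obtain ⟨hn, hq⟩ := out_mem_lieClasses q.2
    exact ⟨_, ⟨q.1.out, hq.mem_fac, hn, rfl⟩, rfl⟩

theorem linearIndependent_lieRep : LinearIndependent ℚ (lieRep w n) := by
  classical
  let g : List α → Quotient (List.IsRotated.setoid α) →₀ ℚ := fun u =>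
    if RotationsFac w u then Finsupp.single (Quotient.mk _ u) 1 else 0
  have g_rotate : ∀ u v, u ~r v → g u = g v := by
    intro u v huv
    have hiff : RotationsFac w u ↔ RotationsFac w v :=
      ⟨(·.of_isRotated huv), (·.of_isRotated huv.symm)⟩
    simp only [g, hiff, @Quotient.sound _ (List.IsRotated.setoid α) _ _ huv]
  obtain ⟨T, hT⟩ := exists_linearMap_facCls g fun u hu => if_neg fun h => hu h.mem_fac
  have hTW : Wspace w n ≤ LinearMap.ker T := by
    rw [Wspace, Submodule.span_le]
    rintro _ ⟨u, -, v, -, -, rfl⟩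
    rw [SetLike.mem_coe, LinearMap.mem_ker, ← facCls_append, ← facCls_append, map_sub, hT, hT,
      g_rotate _ _ List.isRotated_append, sub_self]
  have hcomp : (Wspace w n).liftQ T hTW ∘ lieRep w n = fun q => Finsupp.single q.1 1 := by
    funext q
    obtain ⟨-, hq⟩ := out_mem_lieClasses q.2
    simp only [Function.comp_apply, lieRep, Submodule.mkQ_apply, Submodule.liftQ_apply, hT, g,
      if_pos hq, Quotient.out_eq]
  refine LinearIndependent.of_comp ((Wspace w n).liftQ T hTW) ?_
  rw [hcomp]
  exact (Finsupp.linearIndependent_single_one ℚ _).comp _ Subtype.val_injective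

end Counting

instance [Finite α] (w : ℕ → α) (n : ℕ) : FiniteDimensional ℚ (Vspace w n) := by
  apply FiniteDimensional.span_of_finite
  refine ((List.finite_length_eq α n).image (facCls w)).subset ?_
  rintro _ ⟨u, -, hn, rfl⟩
  exact ⟨u, hn, rfl⟩

theorem lie_eq_dim_sub_dim [Fintype α] (w : ℕ → α) (n : ℕ) :
    LieComplexity w n = Module.finrank ℚ (Vspace w n) - Module.finrank ℚ (Wspace w n) := by
  have h := Submodule.finrank_map_mkQ_add_finrank (wspace_le_vspace (w := w) (n := n))
  rw [map_mkQ_vspace_eq_span_lieRep, Submodule.finrank_span_eq_natCard linearIndependent_lieRep,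
    Nat.card_coe_set_eq] at h
  rw [lieComplexity_eq_ncard]
  omega
end

section
/- For every function f : ℕ → ℕ tending to infinity, there exists a recurrent right-infinite binary word w such that p_w(n) ≤ n·f(n) for all sufficiently large n, yet w has infinitely many distinct primitive factors y with the property that y^n is a factor of w for every n ≥ 1. -/
variable {α : Type*}

/-!
The word is the limit of `U₀ = 1`, `U_{k+1} = U_k (0^{a_k} 1)^{|U_k| + 2} U_k`, where every term
of a sparse increasing sequence `s` occurs infinitely often among the `a_k`. Each `0^{s i} 1` is
then a primitive factor with unbounded exponents, and recurrence holds because `U_k` reoccurs at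
the end of `U_{k+1}`.

For the complexity, fix `n` and the last stage `U_q` shorter than `n`. A length-`n` factor either
lies in `U_{q+1}` or meets a later block power, of which it only sees the length-`n` suffix and
prefix of the neighbouring stages and a piece of `(0^a 1)^∞` with `a` capped at `n + 1`; such a
piece occurs already in `n / (a + 1) + 2` periods. Hence all length-`n` factors lie in
`O(#{i | s i ≤ n})` words of length `O(n)`, and `s` is chosen so sparse that `f n` dominates
this count.
-/

open List

theorem listPow_succ' (y : List α) (k : ℕ) : listPow y (k + 1) = listPow y k ++ y := by
  induction k with
  | zero => simp [listPow]
  | succ k ih =>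
    change y ++ listPow y (k + 1) = (y ++ listPow y k) ++ y
    rw [ih, append_assoc]

theorem listPow_add (y : List α) (k m : ℕ) : listPow y (k + m) = listPow y k ++ listPow y m := by
  induction k with
  | zero => simp [listPow]
  | succ k ih => rw [Nat.succ_add, listPow, ih, listPow, append_assoc]

theorem length_listPow (y : List α) (k : ℕ) : (listPow y k).length = k * y.length := by
  induction k with
  | zero => simp [listPow]
  | succ k ih => rw [listPow, length_append, ih, Nat.succ_mul, Nat.add_comm]

theorem count_listPow [BEq α] (y : List α) (c : α) (k : ℕ) :
    (listPow y k).count c = k * y.count c := by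
  induction k with
  | zero => simp [listPow]
  | succ k ih => rw [listPow, count_append, ih, Nat.succ_mul, Nat.add_comm]

theorem listPow_singleton (c : α) (k : ℕ) : listPow [c] k = replicate k c := by
  induction k with
  | zero => rfl
  | succ k ih => rw [listPow, ih, replicate_succ, singleton_append]

theorem listPow_prefix_of_le (y : List α) {k m : ℕ} (h : k ≤ m) : listPow y k <+: listPow y m :=
  ⟨listPow y (m - k), by rw [← listPow_add, Nat.add_sub_cancel' h]⟩

theorem infix_append_or_infix_append_of_length_le {u x y z : List α}
    (h : u <:+: x ++ y ++ z) (hu : u.length ≤ y.length) : u <:+: x ++ y ∨ u <:+: y ++ z := by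
  obtain ⟨s, t, hst⟩ := h
  by_cases hs : s.length + u.length ≤ x.length + y.length
  · left
    have hpre : s ++ u <+: x ++ y :=
      prefix_of_prefix_length_le (l₃ := x ++ y ++ z) ⟨t, hst⟩ ⟨z, rfl⟩ (by simpa using hs)
    exact (infix_append s u []).trans (by simpa using hpre.isInfix)
  · right
    obtain ⟨s', rfl⟩ : x <+: s :=
      prefix_of_prefix_length_le (l₃ := x ++ y ++ z) ⟨y ++ z, by simp⟩ ⟨u ++ t, by simp [← hst]⟩
        (by simp at hs; omega)
    exact ⟨s', t, by simpa using hst⟩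

theorem infix_listPow_of_infix_listPow_succ {u y : List α} {k : ℕ}
    (hk : u.length + y.length ≤ (listPow y k).length) (h : u <:+: listPow y (k + 1)) :
    u <:+: listPow y k := by
  cases k with
  | zero => simp_all [listPow]
  | succ k =>
    have hu : u.length ≤ (listPow y k).length := by
      rw [listPow, length_append] at hk; omega
    rw [listPow_succ', listPow] at h
    rcases infix_append_or_infix_append_of_length_le h hu with h | h
    · exact h
    · rwa [← listPow_succ'] at h

theorem infix_append_listPow_append_of_succ {u x y z : List α} {k : ℕ}
    (hk : u.length + y.length ≤ (listPow y k).length)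
    (h : u <:+: x ++ listPow y (k + 1) ++ z) : u <:+: x ++ listPow y k ++ z := by
  have hu : u.length ≤ (listPow y k).length := by omega
  rw [listPow, ← append_assoc] at h
  rcases infix_append_or_infix_append_of_length_le h hu with h | h
  · rw [append_assoc, ← listPow, listPow_succ', ← append_assoc] at h
    rcases infix_append_or_infix_append_of_length_le h hu with h | h
    · exact h.trans (infix_append [] _ z)
    · rw [← listPow_succ'] at h
      exact (infix_listPow_of_infix_listPow_succ hk h).trans (infix_append x _ z)
  · exact h.trans (by simpa using infix_append x (listPow y k ++ z) [])

theorem infix_append_listPow_min_append {u x y z : List α} {b c : ℕ}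
    (hc : u.length + y.length ≤ (listPow y c).length)
    (h : u <:+: x ++ listPow y b ++ z) : u <:+: x ++ listPow y (min b c) ++ z := by
  induction b with
  | zero => simpa [listPow] using h
  | succ b ih =>
    rcases le_or_gt (b + 1) c with hb | hb
    · rwa [min_eq_left hb]
    · have hcb : (listPow y c).length ≤ (listPow y b).length := by
        simp only [length_listPow]; exact Nat.mul_le_mul_right _ (by omega)
      rw [min_eq_right hb.le, ← min_eq_right (Nat.le_of_lt_succ hb)]
      exact ih (infix_append_listPow_append_of_succ (hc.trans hcb) h)

def block (a : ℕ) : List Bool := replicate a false ++ [true]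

theorem length_block (a : ℕ) : (block a).length = a + 1 := by simp [block]

theorem block_injective : Function.Injective block := fun a b h => by
  simpa [length_block] using congrArg length h

theorem primitive_block (a : ℕ) : Primitive (block a) := by
  refine ⟨by simp [block], fun z k h => ?_⟩
  have hcount : 1 = k * z.count true := by
    rw [← count_listPow, ← h]; simp [block, count_replicate]
  exact Nat.eq_one_of_mul_eq_one_right hcount.symm

theorem infix_append_listPow_block_min_append {u x z : List Bool} {a b n : ℕ}
    (hu : u.length ≤ n) (h : u <:+: x ++ listPow (block a) b ++ z) :
    u <:+: x ++ listPow (block (min a (n + 1))) b ++ z := by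
  induction b generalizing x with
  | zero => simpa [listPow] using h
  | succ b ih =>
    have hrun : u <:+: x ++ listPow [false] (min a (n + 1)) ++
        ([true] ++ listPow (block a) b ++ z) := by
      apply infix_append_listPow_min_append (by simp [length_listPow]; omega)
      simpa [listPow, block, listPow_singleton] using h
    simpa [listPow, block, listPow_singleton] using
      ih (x := x ++ block (min a (n + 1))) (by simpa [block, listPow_singleton] using hrun)

/-- Length-`n` factors cannot tell this from `listPow (block a) b`: zero runs are capped at
`n + 1`, and the exponent at `n / (a + 1) + 2`, which leaves a full period beyond any window. -/
def truncBlockPow (n a b : ℕ) : List Bool :=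
  listPow (block (min a (n + 1))) (min b (n / (min a (n + 1) + 1) + 2))

theorem infix_append_truncBlockPow_append {u x z : List Bool} {n a b : ℕ} (hu : u.length = n)
    (h : u <:+: x ++ listPow (block a) b ++ z) : u <:+: x ++ truncBlockPow n a b ++ z := by
  refine infix_append_listPow_min_append ?_ (infix_append_listPow_block_min_append hu.le h)
  have hdiv := Nat.lt_div_mul_add (a := n) (Nat.succ_pos (min a (n + 1)))
  rw [length_listPow, length_block, hu, Nat.add_mul]
  generalize n / (min a (n + 1) + 1) = p at hdiv ⊢
  generalize min a (n + 1) = m at hdiv ⊢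
  simp only [Nat.succ_eq_add_one] at hdiv
  omega

theorem length_truncBlockPow_le (n a b : ℕ) : (truncBlockPow n a b).length ≤ 3 * n + 4 := by
  have hdiv := Nat.div_mul_le_self n (min a (n + 1) + 1)
  have hm : min a (n + 1) ≤ n + 1 := min_le_right _ _
  rw [truncBlockPow, length_listPow, length_block]
  generalize n / (min a (n + 1) + 1) = p at hdiv ⊢
  generalize min a (n + 1) = m at hdiv hm ⊢
  calc min b (p + 2) * (m + 1) ≤ (p + 2) * (m + 1) := Nat.mul_le_mul_right _ (min_le_right _ _)
    _ = p * (m + 1) + 2 * (m + 1) := Nat.add_mul _ _ _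
    _ ≤ 3 * n + 4 := by omega

theorem truncBlockPow_of_le {n b : ℕ} (a : ℕ) (hb : n + 2 ≤ b) :
    truncBlockPow n a b = truncBlockPow n a (n + 2) := by
  have : n / (min a (n + 1) + 1) ≤ n := Nat.div_le_self _ _
  simp only [truncBlockPow]
  congr 1
  omega

theorem truncBlockPow_min (n a b : ℕ) :
    truncBlockPow n (min a (n + 1)) b = truncBlockPow n a b := by
  simp [truncBlockPow]

def windows [DecidableEq α] (n : ℕ) (x : List α) : Finset (List α) :=
  (x.tails.map (take n)).toFinset

theorem mem_windows [DecidableEq α] {n : ℕ} {u x : List α} (hu : u.length = n) (h : u <:+: x) :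
    u ∈ windows n x := by
  obtain ⟨t, hut, htx⟩ := infix_iff_prefix_suffix.mp h
  rw [windows, mem_toFinset, mem_map]
  exact ⟨t, (mem_tails t x).mpr htx, by rw [← hu, ← prefix_iff_eq_take.mp hut]⟩

theorem card_windows_le [DecidableEq α] (n : ℕ) (x : List α) :
    (windows n x).card ≤ x.length + 1 :=
  (toFinset_card_le _).trans (by simp)

theorem facComplexity_le_of_forall_infix {w : ℕ → α} {n L : ℕ} (W : Finset (List α))
    (hW : ∀ x ∈ W, x.length ≤ L) (hcov : ∀ u ∈ Fac w, u.length = n → ∃ x ∈ W, u <:+: x) :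
    FacComplexity w n ≤ W.card * (L + 1) := by
  classical
  have hsub : {u | u.length = n ∧ u ∈ Fac w} ⊆ ↑(W.biUnion (windows n)) := by
    rintro u ⟨hu, hfac⟩
    obtain ⟨x, hx, hux⟩ := hcov u hfac hu
    exact Finset.mem_biUnion.mpr ⟨x, hx, mem_windows hu hux⟩
  calc FacComplexity w n ≤ (W.biUnion (windows n)).card := by
        rw [FacComplexity, ← Set.ncard_coe_finset]
        exact Set.ncard_le_ncard hsub (Finset.finite_toSet _)
    _ ≤ ∑ x ∈ W, (windows n x).card := Finset.card_biUnion_le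
    _ ≤ W.card * (L + 1) := by
        simpa using Finset.sum_le_card_nsmul W _ (L + 1)
          fun x hx => (card_windows_le n x).trans (by simpa using hW x hx)

theorem prefix_of_le_of_prefix_succ {U : ℕ → List α} (hU : ∀ k, U k <+: U (k + 1)) {k m : ℕ}
    (h : k ≤ m) : U k <+: U m :=
  Nat.rel_of_forall_rel_succ_of_le (· <+: ·) hU h

section PrefixChain

variable [Inhabited α] {U : ℕ → List α}

/-- `default` is never read when `k < (U k).length` for all `k`. -/
def chainLimit (U : ℕ → List α) (i : ℕ) : α := (U (i + 1)).getD i default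

theorem chainLimit_eq_getElem (hU : ∀ k, U k <+: U (k + 1)) (hlen : ∀ k, k < (U k).length)
    {k i : ℕ} (hi : i < (U k).length) : chainLimit U i = (U k)[i] := by
  rw [chainLimit, getD_eq_getElem _ _ ((Nat.lt_succ_self i).trans (hlen (i + 1)))]
  rcases le_total k (i + 1) with h | h
  · exact ((prefix_of_le_of_prefix_succ hU h).getElem hi).symm
  · exact (prefix_of_le_of_prefix_succ hU h).getElem _

theorem factorAt_chainLimit_iff (hU : ∀ k, U k <+: U (k + 1)) (hlen : ∀ k, k < (U k).length)
    {k i : ℕ} {u : List α} (hk : i + u.length ≤ (U k).length) :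
    FactorAt (chainLimit U) i u ↔ u = ((U k).drop i).take u.length := by
  suffices (range u.length).map (fun j => chainLimit U (i + j)) = ((U k).drop i).take u.length by
    rw [FactorAt, this]
  refine ext_getElem (by simp; omega) fun j h₁ h₂ => ?_
  simp only [getElem_map, getElem_range, getElem_take, getElem_drop]
  exact chainLimit_eq_getElem hU hlen _

theorem factorAt_chainLimit_of_append_eq (hU : ∀ k, U k <+: U (k + 1))
    (hlen : ∀ k, k < (U k).length) {k : ℕ} {s u t : List α} (h : s ++ u ++ t = U k) :
    FactorAt (chainLimit U) s.length u :=
  (factorAt_chainLimit_iff hU hlen (k := k) (by simp [← h])).mpr (by simp [← h])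

theorem mem_fac_chainLimit_iff (hU : ∀ k, U k <+: U (k + 1)) (hlen : ∀ k, k < (U k).length)
    {u : List α} : u ∈ Fac (chainLimit U) ↔ ∃ k, u <:+: U k := by
  constructor
  · rintro ⟨i, hi⟩
    have hk := hlen (i + u.length)
    rw [factorAt_chainLimit_iff hU hlen hk.le] at hi
    have := (take_prefix u.length ((U (i + u.length)).drop i)).isInfix.trans
      (drop_suffix _ _).isInfix
    exact ⟨i + u.length, by rwa [← hi] at this⟩
  · rintro ⟨k, s, t, h⟩
    exact ⟨s.length, factorAt_chainLimit_of_append_eq hU hlen h⟩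

theorem chainLimit_recurrent (hU : ∀ k, U k <+: U (k + 1)) (hlen : ∀ k, k < (U k).length)
    (hrec : ∀ m, ∃ x, m ≤ x.length ∧ x ++ U m <+: U (m + 1)) :
    ∀ u ∈ Fac (chainLimit U), ∀ N, ∃ i, N ≤ i ∧ FactorAt (chainLimit U) i u := by
  intro u hu N
  obtain ⟨k, hk⟩ := (mem_fac_chainLimit_iff hU hlen).mp hu
  obtain ⟨s, t, hst⟩ := hk.trans (prefix_of_le_of_prefix_succ hU (le_max_left k N)).isInfix
  obtain ⟨x, hx, r, hxr⟩ := hrec (max k N)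
  refine ⟨(x ++ s).length, ?_, factorAt_chainLimit_of_append_eq hU hlen (k := max k N + 1)
    (t := t ++ r) ?_⟩
  · simp only [length_append]; omega
  · rw [← hxr, ← hst]; simp

end PrefixChain

/-- The `+ 2` makes `truncBlockPow_of_le` apply at every stage of length at least `n`. -/
def stage (g : ℕ → ℕ) : ℕ → List Bool
  | 0 => [true]
  | k + 1 => stage g k ++ listPow (block (g k)) ((stage g k).length + 2) ++ stage g k

def word (g : ℕ → ℕ) : ℕ → Bool := chainLimit (stage g)

theorem lt_length_stage (g : ℕ → ℕ) (k : ℕ) : k < (stage g k).length := by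
  induction k with
  | zero => simp [stage]
  | succ k ih => simp only [stage, length_append]; omega

theorem strictMono_length_stage (g : ℕ → ℕ) : StrictMono fun k => (stage g k).length :=
  strictMono_nat_of_lt_succ fun k => by
    have := lt_length_stage g k
    simp only [stage, length_append]; omega

theorem stage_prefix_succ (g : ℕ → ℕ) (k : ℕ) : stage g k <+: stage g (k + 1) :=
  ⟨_, by rw [stage, append_assoc]⟩

theorem stage_suffix_succ (g : ℕ → ℕ) (k : ℕ) : stage g k <:+ stage g (k + 1) := ⟨_, rfl⟩

theorem stage_prefix_of_le (g : ℕ → ℕ) {k m : ℕ} (h : k ≤ m) : stage g k <+: stage g m :=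
  prefix_of_le_of_prefix_succ (stage_prefix_succ g) h

theorem stage_suffix_of_le (g : ℕ → ℕ) {k m : ℕ} (h : k ≤ m) : stage g k <:+ stage g m :=
  Nat.rel_of_forall_rel_succ_of_le (· <:+ ·) (stage_suffix_succ g) h

theorem mem_fac_word_iff {g : ℕ → ℕ} {u : List Bool} : u ∈ Fac (word g) ↔ ∃ k, u <:+: stage g k :=
  mem_fac_chainLimit_iff (stage_prefix_succ g) (lt_length_stage g)

theorem word_recurrent (g : ℕ → ℕ) :
    ∀ u ∈ Fac (word g), ∀ N, ∃ i, N ≤ i ∧ FactorAt (word g) i u :=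
  chainLimit_recurrent (stage_prefix_succ g) (lt_length_stage g) fun m =>
    ⟨stage g m ++ listPow (block (g m)) ((stage g m).length + 2),
      by have := lt_length_stage g m; simp only [length_append]; omega, ⟨[], by simp [stage]⟩⟩

theorem listPow_block_mem_fac_word {g : ℕ → ℕ} {k m : ℕ} (h : m ≤ k + 2) :
    listPow (block (g k)) m ∈ Fac (word g) := by
  obtain ⟨r, hr⟩ := listPow_prefix_of_le (block (g k))
    (h.trans (Nat.add_le_add_right (lt_length_stage g k).le 2))
  exact mem_fac_word_iff.mpr ⟨k + 1, stage g k, r ++ stage g k, by rw [stage, ← hr]; simp⟩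

/-- `S` and `P` are the common suffix and prefix of length `n` of all stages from `q + 1` on. -/
theorem infix_stage_cases {g : ℕ → ℕ} {n q K : ℕ} {u S P : List Bool}
    (hS : S <:+ stage g (q + 1)) (hP : P <+: stage g (q + 1)) (hSn : S.length = n)
    (hPn : P.length = n) (hu : u.length = n) (hK : q + 1 ≤ K) (h : u <:+: stage g K) :
    u <:+: stage g q ++ truncBlockPow n (g q) ((stage g q).length + 2) ++ stage g q ∨
      ∃ k, u <:+: S ++ truncBlockPow n (g k) (n + 2) ++ P := by
  induction K, hK using Nat.le_induction with
  | base => exact Or.inl (infix_append_truncBlockPow_append hu h)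
  | succ K hK ih =>
    obtain ⟨X, hX⟩ := hS.trans (stage_suffix_of_le g hK)
    obtain ⟨Y, hY⟩ := hP.trans (stage_prefix_of_le g hK)
    set V := listPow (block (g K)) ((stage g K).length + 2)
    have hsplit : stage g (K + 1) = X ++ S ++ (V ++ P ++ Y) := by
      rw [show X ++ S ++ (V ++ P ++ Y) = X ++ S ++ V ++ (P ++ Y) by simp, hX, hY]; rfl
    rw [hsplit] at h
    rcases infix_append_or_infix_append_of_length_le h (hu.trans hSn.symm).le with h | h
    · exact ih (hX ▸ h)
    rw [show S ++ (V ++ P ++ Y) = S ++ V ++ P ++ Y by simp] at h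
    rcases infix_append_or_infix_append_of_length_le h (hu.trans hPn.symm).le with h | h
    · refine Or.inr ⟨K, ?_⟩
      have hlen : n + 2 ≤ (stage g K).length + 2 := by
        have := (hS.trans (stage_suffix_of_le g hK)).length_le; omega
      rw [← truncBlockPow_of_le _ hlen]
      exact infix_append_truncBlockPow_append hu h
    · exact ih (hY ▸ h)

theorem facComplexity_word_le {g : ℕ → ℕ} {n : ℕ} (hn : 2 ≤ n) (Γ : Finset ℕ)
    (hΓ : ∀ k, min (g k) (n + 1) ∈ Γ) : FacComplexity (word g) n ≤ (Γ.card + 1) * (5 * n + 5) := by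
  classical
  obtain ⟨q, hq, hq'⟩ := (strictMono_length_stage g).exists_between_of_tendsto_atTop
    (strictMono_length_stage g).tendsto_atTop (x := n) (by simp [stage]; omega)
  set S := (stage g (q + 1)).drop ((stage g (q + 1)).length - n)
  set P := (stage g (q + 1)).take n
  have hSn : S.length = n := by simp only [S, length_drop]; omega
  have hPn : P.length = n := by simp only [P, length_take]; omega
  set W := insert (stage g q ++ truncBlockPow n (g q) ((stage g q).length + 2) ++ stage g q)
    (Γ.image fun a => S ++ truncBlockPow n a (n + 2) ++ P)
  have hW : W.card ≤ Γ.card + 1 :=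
    (Finset.card_insert_le _ _).trans (Nat.add_le_add_right Finset.card_image_le 1)
  refine (facComplexity_le_of_forall_infix W (L := 5 * n + 4) ?_ ?_).trans
    (Nat.mul_le_mul_right _ hW)
  · simp only [W, Finset.mem_insert, Finset.mem_image]
    rintro x (rfl | ⟨a, -, rfl⟩)
    · have := length_truncBlockPow_le n (g q) ((stage g q).length + 2)
      simp only [length_append]; omega
    · have := length_truncBlockPow_le n a (n + 2)
      simp only [length_append, hSn, hPn]; omega
  · intro u hfac hu
    obtain ⟨k, hk⟩ := mem_fac_word_iff.mp hfac
    rcases infix_stage_cases (drop_suffix _ _) (take_prefix _ _) hSn hPn hu (le_max_right k (q + 1))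
      (hk.trans (stage_prefix_of_le g (le_max_left k (q + 1))).isInfix) with h | ⟨k, h⟩
    · exact ⟨_, Finset.mem_insert_self _ _, h⟩
    · refine ⟨_, Finset.mem_insert_of_mem (Finset.mem_image_of_mem _ (hΓ k)), ?_⟩
      rwa [truncBlockPow_min]

theorem min_mem_image_range_of_strictMono {s : ℕ → ℕ} (hs : StrictMono s) {i n : ℕ}
    (hi : n + 1 ≤ s (i + 1)) (j : ℕ) :
    min (s j) (n + 1) ∈ (Finset.range (i + 2)).image fun j => min (s j) (n + 1) := by
  rcases le_or_gt j (i + 1) with hj | hj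
  · exact Finset.mem_image_of_mem _ (Finset.mem_range.mpr (by omega))
  · refine Finset.mem_image.mpr ⟨i + 1, Finset.mem_range.mpr (by omega), ?_⟩
    rw [min_eq_right hi, min_eq_right (hi.trans (hs hj).le)]

theorem facComplexity_word_le_of_strictMono {g s : ℕ → ℕ} (hs : StrictMono s)
    (hg : ∀ k, ∃ j, g k = s j) {i n : ℕ} (hn : 2 ≤ n) (hi : n + 1 ≤ s (i + 1)) :
    FacComplexity (word g) n ≤ (i + 3) * (5 * n + 5) := by
  refine (facComplexity_word_le hn ((Finset.range (i + 2)).image fun j => min (s j) (n + 1))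
    fun k => ?_).trans (Nat.mul_le_mul_right _ ?_)
  · obtain ⟨j, hj⟩ := hg k
    exact hj ▸ min_mem_image_range_of_strictMono hs hi j
  · have := Finset.card_image_le (s := Finset.range (i + 2)) (f := fun j => min (s j) (n + 1))
    rw [Finset.card_range] at this
    omega

theorem construction_with_many_unbounded_exponents (f : ℕ → ℕ)
    (hf : Filter.Tendsto f Filter.atTop Filter.atTop) :
    ∃ w : ℕ → Bool,
      (∀ u ∈ Fac w, ∀ N : ℕ, ∃ i : ℕ, N ≤ i ∧ FactorAt w i u) ∧
      (∃ N : ℕ, ∀ n : ℕ, N ≤ n → FacComplexity w n ≤ n * f n) ∧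
      {y : List Bool | Primitive y ∧ ∀ n : ℕ, 1 ≤ n → listPow y n ∈ Fac w}.Infinite := by
  obtain ⟨s, hs, hsf⟩ := Filter.extraction_forall_of_eventually
    (P := fun i k => ∀ n, k ≤ n → 10 * (i + 3) ≤ f n)
    fun i => Filter.eventually_forall_ge_atTop.mpr (hf.eventually_ge_atTop _)
  set g : ℕ → ℕ := fun k => s k.unpair.1
  refine ⟨word g, word_recurrent g, ⟨max (s 0) 2, fun n hn => ?_⟩, ?_⟩
  · obtain ⟨i, hi, hi'⟩ :=
      hs.exists_between_of_tendsto_atTop hs.tendsto_atTop (x := n + 1) (by omega)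
    calc FacComplexity (word g) n ≤ (i + 3) * (5 * n + 5) :=
          facComplexity_word_le_of_strictMono hs (fun k => ⟨_, rfl⟩) (by omega) hi'
      _ ≤ n * (10 * (i + 3)) := by nlinarith [le_of_max_le_right hn]
      _ ≤ n * f n := Nat.mul_le_mul_left n (hsf i n (by omega))
  · refine Set.infinite_of_injective_forall_mem (f := fun i => block (s i))
      (block_injective.comp hs.injective) fun i => ⟨primitive_block _, fun m _ => ?_⟩
    simpa [g] using listPow_block_mem_fac_word (g := g) (k := Nat.pair i m)
      ((Nat.right_le_pair i m).trans (Nat.le_add_right _ 2))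
end
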